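/- arXiv:1806.09757 — 4 statements merged into one kernel-verified Lean document; each statement's English description precedes it below -/
import Mathlib

section
/- (Theorem 1, leaderless adaptive guaranteed-performance consensualization.) Let N ≥ 2, d, p be positive integers, A ∈ ℝ^{d×d}, B ∈ ℝ^{d×p}. Let l : {1,…,N}² → {0,1} satisfy l_{ii} = 0 and l_{ik} = l_{ki}, and assume the undirected graph on {1,…,N} with an edge {i,k} whenever l_{ik} = 1 is connected. Let Q ∈ ℝ^{d×d} be symmetric positive definite, let γ > 0, and suppose P ∈ ℝ^{d×d} is symmetric positive definite with PA + AᵀP − γPBBᵀP + 2Q negative semidefinite. Set K_u = BᵀP and K_w = PBBᵀP. Let x_i : ℝ → ℝ^d (i = 1,…,N) and w_{ik} : ℝ → ℝ (i ≠ k) be differentiable and satisfy, for all t ≥ 0: ẋ_i(t) = A x_i(t) + B K_u ∑_{k≠i} l_{ik} w_{ik}(t)(x_k(t) − x_i(t)); ẇ_{ik}(t) = (x_k(t) − x_i(t))ᵀ K_w (x_k(t) − x_i(t)); w_{ik}(0) = w_{ki}(0) > 0; and each w_{ik} is bounded above on [0,∞). Then (i) for all i, k, x_i(t) − x_k(t)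 → 0 as t → +∞, and (ii) writing x(t) ∈ ℝ^{Nd} for the stacked vector (x_1(t),…,x_N(t)), the function t ↦ x(t)ᵀ((I_N − (1/N)1_N1_Nᵀ) ⊗ PBBᵀP) x(t) is integrable on [0,∞) and (1/N) ∑_{i=1}^N ∑_{k=1}^N ∫_0^∞ (x_k(t) − x_i(t))ᵀ Q (x_k(t) − x_i(t)) dt ≤ x(0)ᵀ((I_N − (1/N)1_N1_Nᵀ) ⊗ P) x(0) + γ ∫_0^∞ x(t)ᵀ((I_N − (1/N)1_N1_Nᵀ) ⊗ PBBᵀP) x(t) dt. -/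
open Matrix MeasureTheory Filter Kronecker

namespace LAGPC

variable {m : ℕ}

lemma dot_mulVec_eq_sum (S : Matrix (Fin m) (Fin m) ℝ) (u v : Fin m → ℝ) :
    u ⬝ᵥ S.mulVec v = ∑ a, ∑ b, u a * S a b * v b := by
  simp only [dotProduct, Matrix.mulVec, dotProduct, Finset.mul_sum, mul_assoc]

lemma dot_symm (S : Matrix (Fin m) (Fin m) ℝ) (hS : Sᵀ = S) (u v : Fin m → ℝ) :
    u ⬝ᵥ S.mulVec v = v ⬝ᵥ S.mulVec u := by
  rw [dot_mulVec_eq_sum, dot_mulVec_eq_sum, Finset.sum_comm]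
  refine Finset.sum_congr rfl fun a _ => Finset.sum_congr rfl fun b _ => ?_
  have hba : S b a = S a b := by
    conv_lhs => rw [← hS]
    exact Matrix.transpose_apply S b a
  rw [hba]; ring

lemma quad_neg (S : Matrix (Fin m) (Fin m) ℝ) (v : Fin m → ℝ) :
    (-v) ⬝ᵥ S.mulVec (-v) = v ⬝ᵥ S.mulVec v := by
  rw [Matrix.mulVec_neg, neg_dotProduct, dotProduct_neg, neg_neg]

lemma quad_transpose (S : Matrix (Fin m) (Fin m) ℝ) (v : Fin m → ℝ) :
    v ⬝ᵥ Sᵀ.mulVec v = v ⬝ᵥ S.mulVec v := by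
  rw [dot_mulVec_eq_sum, dot_mulVec_eq_sum, Finset.sum_comm]
  refine Finset.sum_congr rfl fun a _ => Finset.sum_congr rfl fun b _ => ?_
  rw [Matrix.transpose_apply]; ring

lemma dot_transpose_mul_self {p : ℕ} (M : Matrix (Fin p) (Fin m) ℝ) (v : Fin m → ℝ) :
    v ⬝ᵥ (Mᵀ * M).mulVec v = (M.mulVec v) ⬝ᵥ (M.mulVec v) := by
  rw [← Matrix.mulVec_mulVec, Matrix.dotProduct_mulVec, Matrix.vecMul_transpose]

lemma self_dot_nonneg (v : Fin m → ℝ) : 0 ≤ v ⬝ᵥ v := by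
  exact Finset.sum_nonneg fun a _ => mul_self_nonneg _

lemma dot_sum_right {n : ℕ} (S : Matrix (Fin m) (Fin m) ℝ) (v : Fin m → ℝ)
    (z : Fin n → Fin m → ℝ) :
    ∑ k, v ⬝ᵥ S.mulVec (z k) = v ⬝ᵥ S.mulVec (∑ k, z k) := by
  simp only [dot_mulVec_eq_sum]
  rw [Finset.sum_comm]
  refine Finset.sum_congr rfl fun a _ => ?_
  rw [Finset.sum_comm]
  refine Finset.sum_congr rfl fun b _ => ?_
  rw [Finset.sum_apply, Finset.mul_sum]

lemma dot_sum_left {n : ℕ} (S : Matrix (Fin m) (Fin m) ℝ) (v : Fin m → ℝ)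
    (z : Fin n → Fin m → ℝ) :
    ∑ k, (z k) ⬝ᵥ S.mulVec v = (∑ k, z k) ⬝ᵥ S.mulVec v := by
  simp only [dot_mulVec_eq_sum]
  rw [Finset.sum_comm]
  refine Finset.sum_congr rfl fun a _ => ?_
  rw [Finset.sum_comm]
  refine Finset.sum_congr rfl fun b _ => ?_
  simp only [Finset.sum_apply, Finset.sum_mul]

lemma hasDerivAt_dot (S : Matrix (Fin m) (Fin m) ℝ) {u v : ℝ → Fin m → ℝ}
    {u' v' : Fin m → ℝ} {t : ℝ} (hu : HasDerivAt u u' t) (hv : HasDerivAt v v' t) :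
    HasDerivAt (fun s => u s ⬝ᵥ S.mulVec (v s))
      (u' ⬝ᵥ S.mulVec (v t) + u t ⬝ᵥ S.mulVec v') t := by
  have h : HasDerivAt (fun s => ∑ a, ∑ b, u s a * S a b * v s b)
      (∑ a, ∑ b, (u' a * S a b * v t b + u t a * S a b * v' b)) t := by
    apply HasDerivAt.fun_sum
    intro a _
    apply HasDerivAt.fun_sum
    intro b _
    exact ((hasDerivAt_pi.1 hu a).mul_const (S a b)).mul (hasDerivAt_pi.1 hv b)
  have e1 : (fun s => u s ⬝ᵥ S.mulVec (v s)) = fun s => ∑ a, ∑ b, u s a * S a b * v s b := by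
    funext s; exact dot_mulVec_eq_sum S (u s) (v s)
  rw [e1]
  convert h using 1
  rw [dot_mulVec_eq_sum, dot_mulVec_eq_sum, ← Finset.sum_add_distrib]
  refine Finset.sum_congr rfl fun a _ => ?_
  rw [← Finset.sum_add_distrib]

lemma continuous_dot (S : Matrix (Fin m) (Fin m) ℝ) {u v : ℝ → Fin m → ℝ}
    (hu : Continuous u) (hv : Continuous v) :
    Continuous (fun s => u s ⬝ᵥ S.mulVec (v s)) := by
  have e1 : (fun s => u s ⬝ᵥ S.mulVec (v s)) = fun s => ∑ a, ∑ b, u s a * S a b * v s b := by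
    funext s; exact dot_mulVec_eq_sum S (u s) (v s)
  rw [e1]
  refine continuous_finset_sum _ fun a _ => continuous_finset_sum _ fun b _ => ?_
  exact (((continuous_apply a).comp hu).mul continuous_const).mul ((continuous_apply b).comp hv)

lemma abs_dot_le (u v : Fin m → ℝ) : |u ⬝ᵥ v| ≤ (m : ℝ) * ‖u‖ * ‖v‖ := by
  calc |∑ a, u a * v a| ≤ ∑ a, |u a * v a| := Finset.abs_sum_le_sum_abs _ _
    _ ≤ ∑ _a : Fin m, ‖u‖ * ‖v‖ := by
        refine Finset.sum_le_sum fun a _ => ?_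
        rw [abs_mul]
        have h1 : |u a| ≤ ‖u‖ := by
          have := norm_le_pi_norm u a; simpa using this
        have h2 : |v a| ≤ ‖v‖ := by
          have := norm_le_pi_norm v a; simpa using this
        exact mul_le_mul h1 h2 (abs_nonneg _) (le_trans (abs_nonneg _) h1)
    _ = (m : ℝ) * ‖u‖ * ‖v‖ := by simp [Finset.sum_const, mul_assoc]

lemma mulVec_norm_bound (S : Matrix (Fin m) (Fin m) ℝ) :
    ∃ K : ℝ, 0 ≤ K ∧ ∀ v : Fin m → ℝ, ‖S.mulVec v‖ ≤ K * ‖v‖ := by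
  let f := LinearMap.toContinuousLinearMap (Matrix.mulVecLin S)
  refine ⟨‖f‖, norm_nonneg _, fun v => ?_⟩
  have := f.le_opNorm v
  exact this

lemma continuous_quad (S : Matrix (Fin m) (Fin m) ℝ) :
    Continuous (fun v : Fin m → ℝ => v ⬝ᵥ S.mulVec v) := by
  have e1 : (fun v : Fin m → ℝ => v ⬝ᵥ S.mulVec v)
      = fun v : Fin m → ℝ => ∑ a, ∑ b, v a * S a b * v b := by
    funext v; exact dot_mulVec_eq_sum S v v
  rw [e1]
  refine continuous_finset_sum _ fun a _ => continuous_finset_sum _ fun b _ => ?_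
  exact ((continuous_apply a).mul continuous_const).mul (continuous_apply b)

lemma posdef_coercive (hm : 0 < m) (S : Matrix (Fin m) (Fin m) ℝ) (hS : S.PosDef) :
    ∃ c : ℝ, 0 < c ∧ ∀ v : Fin m → ℝ, c * ‖v‖ ^ 2 ≤ v ⬝ᵥ S.mulVec v := by
  haveI : Nonempty (Fin m) := ⟨⟨0, hm⟩⟩
  have hsph : (Metric.sphere (0 : Fin m → ℝ) 1).Nonempty := by
    obtain ⟨v, hv⟩ := exists_norm_eq (Fin m → ℝ) (zero_le_one)
    exact ⟨v, by simpa using hv⟩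
  have hcpt : IsCompact (Metric.sphere (0 : Fin m → ℝ) 1) := isCompact_sphere _ _
  obtain ⟨v₀, hv₀mem, hv₀min'⟩ := hcpt.exists_isMinOn hsph (continuous_quad S).continuousOn
  have hv₀min : ∀ u ∈ Metric.sphere (0 : Fin m → ℝ) 1,
      v₀ ⬝ᵥ S.mulVec v₀ ≤ u ⬝ᵥ S.mulVec u := fun u hu => hv₀min' hu
  have hv₀norm : ‖v₀‖ = 1 := by simpa using hv₀mem
  have hv₀ne : v₀ ≠ 0 := by intro h; rw [h] at hv₀norm; simp at hv₀norm
  set c := v₀ ⬝ᵥ S.mulVec v₀ with hc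
  have hcpos : 0 < c := by simpa using hS.dotProduct_mulVec_pos hv₀ne
  refine ⟨c, hcpos, fun v => ?_⟩
  rcases eq_or_ne v 0 with rfl | hv
  · simp
  · have hnv : 0 < ‖v‖ := norm_pos_iff.2 hv
    set u := ‖v‖⁻¹ • v with hu
    have hunorm : ‖u‖ = 1 := by
      rw [hu, norm_smul, norm_inv, norm_norm, inv_mul_cancel₀ hnv.ne']
    have humem : u ∈ Metric.sphere (0 : Fin m → ℝ) 1 := by simpa using hunorm
    have hq : u ⬝ᵥ S.mulVec u = ‖v‖⁻¹ * (‖v‖⁻¹ * (v ⬝ᵥ S.mulVec v)) := by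
      rw [hu, smul_dotProduct, Matrix.mulVec_smul, dotProduct_smul]
      simp [smul_eq_mul]
    have := hv₀min u humem
    rw [hq] at this
    have h2 : c * (‖v‖ * ‖v‖) ≤ v ⬝ᵥ S.mulVec v := by
      have h3 : ‖v‖ * ‖v‖ * (‖v‖⁻¹ * (‖v‖⁻¹ * (v ⬝ᵥ S.mulVec v))) = v ⬝ᵥ S.mulVec v := by
        field_simp
      calc c * (‖v‖ * ‖v‖) = ‖v‖ * ‖v‖ * c := by ring
        _ ≤ ‖v‖ * ‖v‖ * (‖v‖⁻¹ * (‖v‖⁻¹ * (v ⬝ᵥ S.mulVec v))) :=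
            mul_le_mul_of_nonneg_left this (by positivity)
        _ = v ⬝ᵥ S.mulVec v := h3
    calc c * ‖v‖ ^ 2 = c * (‖v‖ * ‖v‖) := by ring_nf
      _ ≤ v ⬝ᵥ S.mulVec v := h2

lemma barbalat (f : ℝ → ℝ) (hpos : ∀ t, 0 ≤ t → 0 ≤ f t) (L : ℝ) (hL : 0 < L)
    (hlip : ∀ s t, 0 ≤ s → 0 ≤ t → |f s - f t| ≤ L * |s - t|)
    (hint : IntegrableOn f (Set.Ioi 0)) :
    Tendsto f atTop (nhds 0) := by
  rw [Metric.tendsto_atTop]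
  intro ε hε
  set r := ε / (2 * L) with hr
  have hrpos : 0 < r := div_pos hε (by linarith)
  have hLr : L * r = ε / 2 := by
    rw [hr]; field_simp
  have tail : Tendsto (fun T => ∫ t in Set.Ioi T, f t) atTop (nhds 0) := by
    have h1 : Tendsto (fun T => ∫ t in (0:ℝ)..T, f t) atTop (nhds (∫ t in Set.Ioi 0, f t)) :=
      MeasureTheory.intervalIntegral_tendsto_integral_Ioi 0 hint tendsto_id
    have h2 : Tendsto (fun T => (∫ t in Set.Ioi 0, f t) - ∫ t in (0:ℝ)..T, f t) atTop (nhds 0) := by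
      have := (tendsto_const_nhds (x := ∫ t in Set.Ioi 0, f t) (f := atTop (α := ℝ))).sub h1
      simpa using this
    refine h2.congr' ?_
    filter_upwards [eventually_ge_atTop (0:ℝ)] with T hT
    have hsplit : ∫ t in Set.Ioi 0, f t = (∫ t in Set.Ioc 0 T, f t) + ∫ t in Set.Ioi T, f t := by
      rw [← MeasureTheory.setIntegral_union]
      · rw [Set.Ioc_union_Ioi_eq_Ioi hT]
      · exact Set.Ioc_disjoint_Ioi le_rfl
      · exact measurableSet_Ioi
      · exact hint.mono_set (Set.Ioc_subset_Ioi_self)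
      · exact hint.mono_set (Set.Ioi_subset_Ioi hT)
    rw [intervalIntegral.integral_of_le hT]
    rw [hsplit]; ring
  have hev : ∀ᶠ T in atTop, (∫ t in Set.Ioi T, f t) < ε / 2 * r :=
    tail.eventually_lt_const (by positivity)
  obtain ⟨T₀, hT₀⟩ := (hev.and (eventually_ge_atTop (0:ℝ))).exists_forall_of_atTop
  refine ⟨T₀ + r, fun t ht => ?_⟩
  obtain ⟨htail, hT₀0⟩ := hT₀ T₀ le_rfl
  have ht0 : 0 ≤ t := le_trans (by linarith) ht
  rw [Real.dist_eq, sub_zero, abs_of_nonneg (hpos t ht0)]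
  by_contra hcon
  push_neg at hcon
  have hlow : ∀ s ∈ Set.Ioc (t - r) t, ε / 2 ≤ f s := by
    intro s hs
    have hs0 : 0 ≤ s := by
      have : T₀ ≤ t - r := by linarith
      have := hs.1; linarith
    have := hlip s t hs0 ht0
    have habs : |s - t| ≤ r := by
      rw [abs_le]; constructor <;> [linarith [hs.1]; linarith [hs.2]]
    have : |f s - f t| ≤ L * r := le_trans this (by
      have := mul_le_mul_of_nonneg_left habs (le_of_lt hL); linarith)
    rw [hLr] at this
    have := abs_le.1 this
    linarith [this.1]
  have hIoc : Set.Ioc (t - r) t ⊆ Set.Ioi T₀ := by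
    intro s hs
    have : T₀ ≤ t - r := by linarith
    exact lt_of_le_of_lt this hs.1
  have hint1 : IntegrableOn f (Set.Ioc (t - r) t) := by
    refine hint.mono_set fun s hs => ?_
    have h0tr : (0:ℝ) ≤ t - r := by linarith
    exact lt_of_le_of_lt h0tr hs.1
  have hmeas : MeasurableSet (Set.Ioc (t - r) t) := measurableSet_Ioc
  have hvol : (volume (Set.Ioc (t - r) t)) ≠ ⊤ := by
    rw [Real.volume_Ioc]; exact ENNReal.ofReal_ne_top
  have hlb := MeasureTheory.setIntegral_ge_of_const_le hmeas hvol hlow hint1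
  have hvolval : (volume (Set.Ioc (t - r) t)).toReal = r := by
    rw [Real.volume_Ioc, ENNReal.toReal_ofReal (by linarith : (0:ℝ) ≤ t - (t - r))]
    ring_nf
  rw [measureReal_def, hvolval, smul_eq_mul] at hlb
  have hmono : (∫ s in Set.Ioc (t - r) t, f s) ≤ ∫ s in Set.Ioi T₀, f s := by
    refine MeasureTheory.setIntegral_mono_set (hint.mono_set (Set.Ioi_subset_Ioi hT₀0)) ?_ ?_
    · refine (MeasureTheory.ae_restrict_iff' measurableSet_Ioi).2 ?_
      exact Filter.Eventually.of_forall fun s hs => hpos s (le_of_lt (lt_of_le_of_lt hT₀0 hs))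
    · exact HasSubset.Subset.eventuallyLE hIoc
  linarith

lemma quad_kron {n : ℕ} (S : Matrix (Fin m) (Fin m) ℝ)
    (y : Fin n → Fin m → ℝ) :
    (fun q : Fin n × Fin m => y q.1 q.2) ⬝ᵥ
      ((((1 : Matrix (Fin n) (Fin n) ℝ) -
          (n : ℝ)⁻¹ • Matrix.of (fun _ _ : Fin n => (1 : ℝ))) ⊗ₖ S).mulVec
        (fun q : Fin n × Fin m => y q.1 q.2)) =
    (2 * n : ℝ)⁻¹ * ∑ i, ∑ k, (y i - y k) ⬝ᵥ S.mulVec (y i - y k) := by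
  set M : Matrix (Fin n) (Fin n) ℝ :=
    (1 : Matrix (Fin n) (Fin n) ℝ) - (n : ℝ)⁻¹ • Matrix.of (fun _ _ : Fin n => (1 : ℝ)) with hM
  set c : Fin n → Fin n → ℝ := fun i k => y i ⬝ᵥ S.mulVec (y k) with hcdef
  have step1 : (fun q : Fin n × Fin m => y q.1 q.2) ⬝ᵥ
      ((M ⊗ₖ S).mulVec (fun q : Fin n × Fin m => y q.1 q.2))
      = ∑ i, ∑ k, M i k * c i k := by
    simp only [dotProduct, Matrix.mulVec, dotProduct, Fintype.sum_prod_type,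
      Matrix.kroneckerMap_apply, hcdef]
    refine Finset.sum_congr rfl fun i _ => ?_
    simp only [Finset.mul_sum]
    rw [Finset.sum_comm]
    refine Finset.sum_congr rfl fun k _ => Finset.sum_congr rfl fun a _ =>
      Finset.sum_congr rfl fun b _ => ?_
    ring
  rw [step1]
  have hMapp : ∀ i k : Fin n, M i k = (if i = k then (1:ℝ) else 0) - (n:ℝ)⁻¹ := by
    intro i k
    rw [hM]
    simp [Matrix.sub_apply, Matrix.one_apply, Matrix.smul_apply]
  have step2 : ∑ i, ∑ k, M i k * c i k
      = (∑ i, c i i) - (n:ℝ)⁻¹ * ∑ i, ∑ k, c i k := by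
    simp only [hMapp, sub_mul, ite_mul, one_mul, zero_mul]
    simp only [Finset.sum_sub_distrib, Finset.sum_ite_eq, Finset.mem_univ, if_true,
      ← Finset.mul_sum]
  rw [step2]
  have hexp : ∀ i k : Fin n, (y i - y k) ⬝ᵥ S.mulVec (y i - y k)
      = c i i - c i k - c k i + c k k := by
    intro i k
    rw [hcdef]
    simp only [Matrix.mulVec_sub, sub_dotProduct, dotProduct_sub]
    ring
  have step3 : ∑ i, ∑ k, (y i - y k) ⬝ᵥ S.mulVec (y i - y k)
      = 2 * n * (∑ i, c i i) - 2 * ∑ i, ∑ k, c i k := by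
    simp only [hexp]
    have hswap : ∑ i, ∑ k, c k i = ∑ i, ∑ k, c i k := Finset.sum_comm
    simp only [Finset.sum_add_distrib, Finset.sum_sub_distrib, Finset.sum_const,
      Finset.card_univ, Fintype.card_fin, nsmul_eq_mul, ← Finset.mul_sum]
    rw [hswap]
    ring
  rw [step3]
  rcases Nat.eq_zero_or_pos n with rfl | hn
  · simp
  have hnne : (n:ℝ) ≠ 0 := Nat.cast_ne_zero.2 hn.ne'
  field_simp
end LAGPC

set_option maxHeartbeats 4000000 in
/-- Theorem 1 (leaderless adaptive guaranteed-performance consensualization). -/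
theorem leaderless_adaptive_guaranteed_performance_consensus
    (N d p : ℕ) (hN : 2 ≤ N) (hd : 0 < d) (hp : 0 < p)
    (A : Matrix (Fin d) (Fin d) ℝ) (B : Matrix (Fin d) (Fin p) ℝ)
    (l : Fin N → Fin N → ℝ)
    (hl01 : ∀ i k, l i k = 0 ∨ l i k = 1)
    (hldiag : ∀ i, l i i = 0)
    (hlsymm : ∀ i k, l i k = l k i)
    (hconn : (SimpleGraph.fromRel (fun i k : Fin N => l i k = 1)).Connected)
    (Q : Matrix (Fin d) (Fin d) ℝ) (hQ : Q.PosDef)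
    (γ : ℝ) (hγ : 0 < γ)
    (P : Matrix (Fin d) (Fin d) ℝ) (hP : P.PosDef)
    (hRiccati : ∀ v : Fin d → ℝ,
      v ⬝ᵥ (P * A + Aᵀ * P - γ • (P * B * Bᵀ * P) + (2 : ℝ) • Q).mulVec v ≤ 0)
    (Ku : Matrix (Fin p) (Fin d) ℝ) (hKu : Ku = Bᵀ * P)
    (Kw : Matrix (Fin d) (Fin d) ℝ) (hKw : Kw = P * B * Bᵀ * P)
    (x : Fin N → ℝ → (Fin d → ℝ)) (w : Fin N → Fin N → ℝ → ℝ)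
    (hx : ∀ i, Differentiable ℝ (x i))
    (hw : ∀ i k, i ≠ k → Differentiable ℝ (w i k))
    (hdynx : ∀ i, ∀ t : ℝ, 0 ≤ t →
      HasDerivAt (x i)
        (A.mulVec (x i t) +
          (B * Ku).mulVec (∑ k ∈ Finset.univ.erase i, (l i k * w i k t) • (x k t - x i t))) t)
    (hdynw : ∀ i k, i ≠ k → ∀ t : ℝ, 0 ≤ t →
      HasDerivAt (w i k) ((x k t - x i t) ⬝ᵥ Kw.mulVec (x k t - x i t)) t)
    (hw0symm : ∀ i k, i ≠ k → w i k 0 = w k i 0)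
    (hw0pos : ∀ i k, i ≠ k → 0 < w i k 0)
    (hwbdd : ∀ i k, i ≠ k → ∃ C : ℝ, ∀ t : ℝ, 0 ≤ t → w i k t ≤ C) :
    (∀ i k, Tendsto (fun t => x i t - x k t) atTop (nhds 0)) ∧
    IntegrableOn
      (fun t => (fun q : Fin N × Fin d => x q.1 t q.2) ⬝ᵥ
        ((((1 : Matrix (Fin N) (Fin N) ℝ) -
            (N : ℝ)⁻¹ • Matrix.of (fun _ _ : Fin N => (1 : ℝ))) ⊗ₖ
          (P * B * Bᵀ * P)).mulVec (fun q : Fin N × Fin d => x q.1 t q.2)))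
      (Set.Ici (0 : ℝ)) ∧
    (∀ i k : Fin N, IntegrableOn
      (fun t => (x k t - x i t) ⬝ᵥ Q.mulVec (x k t - x i t)) (Set.Ici (0 : ℝ))) ∧
    (N : ℝ)⁻¹ * ∑ i : Fin N, ∑ k : Fin N,
        ∫ t in Set.Ici (0 : ℝ), (x k t - x i t) ⬝ᵥ Q.mulVec (x k t - x i t) ≤
      (fun q : Fin N × Fin d => x q.1 0 q.2) ⬝ᵥ
        ((((1 : Matrix (Fin N) (Fin N) ℝ) -
            (N : ℝ)⁻¹ • Matrix.of (fun _ _ : Fin N => (1 : ℝ))) ⊗ₖ P).mulVec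
          (fun q : Fin N × Fin d => x q.1 0 q.2)) +
      γ * ∫ t in Set.Ici (0 : ℝ),
        (fun q : Fin N × Fin d => x q.1 t q.2) ⬝ᵥ
          ((((1 : Matrix (Fin N) (Fin N) ℝ) -
              (N : ℝ)⁻¹ • Matrix.of (fun _ _ : Fin N => (1 : ℝ))) ⊗ₖ
            (P * B * Bᵀ * P)).mulVec (fun q : Fin N × Fin d => x q.1 t q.2)) := by  classical
  have hNne : (N:ℝ) ≠ 0 := Nat.cast_ne_zero.2 (by omega)
  have hNpos : (0:ℝ) < (N:ℝ) := by positivity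
  subst hKu hKw
  set S : Matrix (Fin d) (Fin d) ℝ := P * B * Bᵀ * P with hSdef
  have hPsymm : Pᵀ = P := by
    have := hP.1
    simpa [Matrix.IsHermitian] using this
  have hQsymm : Qᵀ = Q := by
    have := hQ.1
    simpa [Matrix.IsHermitian] using this
  have hSfact : S = (Bᵀ * P)ᵀ * (Bᵀ * P) := by
    rw [hSdef]
    rw [Matrix.transpose_mul, Matrix.transpose_transpose, hPsymm, Matrix.mul_assoc,
      ← Matrix.mul_assoc]
  have hSsymm : Sᵀ = S := by
    rw [hSfact, Matrix.transpose_mul, Matrix.transpose_transpose]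
  have hSpsd : ∀ v : Fin d → ℝ, 0 ≤ v ⬝ᵥ S.mulVec v := by
    intro v
    rw [hSfact, LAGPC.dot_transpose_mul_self]
    exact LAGPC.self_dot_nonneg _
  have hxc : ∀ i, Continuous (x i) := fun i => (hx i).continuous
  have hquadsymm : ∀ (i k : Fin N) (t : ℝ),
      (x i t - x k t) ⬝ᵥ S.mulVec (x i t - x k t)
        = (x k t - x i t) ⬝ᵥ S.mulVec (x k t - x i t) := by
    intro i k t
    rw [show x i t - x k t = -(x k t - x i t) from (neg_sub _ _).symm]
    exact LAGPC.quad_neg S _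
  have hwsymmT : ∀ i k, i ≠ k → ∀ t : ℝ, 0 ≤ t → w i k t = w k i t := by
    intro i k hik t ht
    set h : ℝ → ℝ := fun s => w i k s - w k i s with hh
    have hds : ∀ s ∈ Set.Ici (0:ℝ), HasDerivWithinAt h 0 (Set.Ici (0:ℝ)) s := by
      intro s hs
      have h1 := (hdynw i k hik s hs).sub (hdynw k i hik.symm s hs)
      rw [hquadsymm k i s] at h1
      rw [sub_self] at h1
      exact h1.hasDerivWithinAt
    have hbd : ∀ s ∈ Set.Ici (0:ℝ), ‖(0:ℝ)‖ ≤ (0:ℝ) := by simp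
    have := Convex.norm_image_sub_le_of_norm_hasDerivWithin_le (C := 0) hds
      (fun s hs => by simp) (convex_Ici 0) (Set.self_mem_Ici) (ht : t ∈ Set.Ici 0)
    have h0 : h 0 = 0 := by rw [hh]; simp [hw0symm i k hik]
    have : ‖h t - h 0‖ ≤ 0 := by simpa using this
    have : h t = h 0 := by
      have := norm_le_zero_iff.1 this
      linarith [sub_eq_zero.1 this]
    rw [h0] at this
    have : w i k t - w k i t = 0 := this
    linarith
  have hwmono : ∀ i k, i ≠ k → MonotoneOn (w i k) (Set.Ici (0:ℝ)) := by
    intro i k hik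
    refine monotoneOn_of_deriv_nonneg (convex_Ici 0) (hw i k hik).continuous.continuousOn
      ((hw i k hik).differentiableOn) ?_
    intro t ht
    rw [interior_Ici] at ht
    rw [(hdynw i k hik t (le_of_lt ht)).deriv]
    exact hSpsd _
  have hwpos : ∀ i k, i ≠ k → ∀ t : ℝ, 0 ≤ t → 0 < w i k t := by
    intro i k hik t ht
    exact lt_of_lt_of_le (hw0pos i k hik) (hwmono i k hik Set.self_mem_Ici ht ht)
  -- uniform upper bounds (choice)
  have hwbdd' : ∀ i k : Fin N, ∃ C : ℝ, ∀ t : ℝ, 0 ≤ t → i ≠ k → w i k t ≤ C := by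
    intro i k
    by_cases h : i = k
    · exact ⟨0, fun t ht hik => absurd h hik⟩
    · obtain ⟨C, hC⟩ := hwbdd i k h
      exact ⟨C, fun t ht _ => hC t ht⟩
  choose Cw hCw using hwbdd'
  -- integrability of the pair quadratics in S
  have hgik_int : ∀ i k : Fin N, IntegrableOn
      (fun t => (x i t - x k t) ⬝ᵥ S.mulVec (x i t - x k t)) (Set.Ioi (0:ℝ)) := by
    intro i k
    by_cases h : i = k
    · subst h
      have : (fun t => (x i t - x i t) ⬝ᵥ S.mulVec (x i t - x i t)) = fun _ => (0:ℝ) := by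
        funext t; simp
      rw [this]
      exact integrableOn_zero
    · have hlim : ∃ lim : ℝ, Tendsto (w i k) atTop (nhds lim) := by
        set wb : ℝ → ℝ := fun t => w i k (max t 0) with hwb
        have hmono : Monotone wb := by
          intro s t hst
          exact hwmono i k h (le_max_right s 0) (le_max_right t 0)
            (max_le_max hst le_rfl)
        have hbdd : BddAbove (Set.range wb) := by
          refine ⟨Cw i k, ?_⟩
          rintro _ ⟨t, rfl⟩
          exact hCw i k (max t 0) (le_max_right t 0) h
        refine ⟨⨆ t, wb t, ?_⟩
        have h1 := tendsto_atTop_ciSup hmono hbdd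
        refine h1.congr' ?_
        filter_upwards [eventually_ge_atTop (0:ℝ)] with t ht
        rw [hwb]; simp [max_eq_left ht]
      obtain ⟨lim, hlim⟩ := hlim
      have := MeasureTheory.integrableOn_Ioi_deriv_of_nonneg'
        (g := w i k) (g' := fun t => (x k t - x i t) ⬝ᵥ S.mulVec (x k t - x i t))
        (a := 0) (l := lim) (fun s hs => hdynw i k h s hs)
        (fun s hs => hSpsd _) hlim
      refine this.congr_fun ?_ measurableSet_Ioi
      intro t ht
      exact (hquadsymm i k t).symm
  -- the control input and the derivative of x
  set u : Fin N → ℝ → (Fin d → ℝ) :=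
    fun i t => ∑ k ∈ Finset.univ.erase i, (l i k * w i k t) • (x k t - x i t) with hu
  set X' : Fin N → ℝ → (Fin d → ℝ) :=
    fun i t => A.mulVec (x i t) + (B * (Bᵀ * P)).mulVec (u i t) with hX'
  have hdx : ∀ i (t : ℝ), 0 ≤ t → HasDerivAt (x i) (X' i t) t := fun i t ht => hdynx i t ht
  have huc : ∀ i, Continuous (u i) := by
    intro i
    refine continuous_finset_sum _ fun k hk => ?_
    have hik : i ≠ k := fun h => (Finset.mem_erase.1 hk).1 h.symm
    exact (continuous_const.mul (hw i k hik).continuous).smul ((hxc k).sub (hxc i))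
  have hmv : ∀ (M : Matrix (Fin d) (Fin d) ℝ) (f : ℝ → Fin d → ℝ), Continuous f →
      Continuous (fun t => M.mulVec (f t)) := by
    intro M f hf
    rw [continuous_pi_iff]
    intro a
    simp only [Matrix.mulVec, dotProduct]
    exact continuous_finset_sum _ fun b _ => continuous_const.mul ((continuous_apply b).comp hf)
  have hX'c : ∀ i, Continuous (X' i) := by
    intro i
    exact (hmv A (x i) (hxc i)).add (hmv (B * (Bᵀ * P)) (u i) (huc i))
  -- the Lyapunov function and related quantities
  set Vfun : ℝ → ℝ := fun t =>
    (2*(N:ℝ))⁻¹ * ∑ i, ∑ k, (x i t - x k t) ⬝ᵥ P.mulVec (x i t - x k t) with hVfun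
  set g : ℝ → ℝ := fun t =>
    (2*(N:ℝ))⁻¹ * ∑ i, ∑ k, (x i t - x k t) ⬝ᵥ S.mulVec (x i t - x k t) with hgdef
  set Φ : ℝ → ℝ := fun t =>
    ((N:ℝ))⁻¹ * ∑ i, ∑ k, (x k t - x i t) ⬝ᵥ Q.mulVec (x k t - x i t) with hΦdef
  set V' : ℝ → ℝ := fun t =>
    ((N:ℝ))⁻¹ * ∑ i, ∑ k, (x i t - x k t) ⬝ᵥ P.mulVec (X' i t - X' k t) with hV'def
  have hVc : Continuous Vfun := continuous_const.mul (continuous_finset_sum _ fun i _ =>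
    continuous_finset_sum _ fun k _ =>
      LAGPC.continuous_dot P ((hxc i).sub (hxc k)) ((hxc i).sub (hxc k)))
  have hgc : Continuous g := continuous_const.mul (continuous_finset_sum _ fun i _ =>
    continuous_finset_sum _ fun k _ =>
      LAGPC.continuous_dot S ((hxc i).sub (hxc k)) ((hxc i).sub (hxc k)))
  have hΦc : Continuous Φ := continuous_const.mul (continuous_finset_sum _ fun i _ =>
    continuous_finset_sum _ fun k _ =>
      LAGPC.continuous_dot Q ((hxc k).sub (hxc i)) ((hxc k).sub (hxc i)))
  have hV'c : Continuous V' := continuous_const.mul (continuous_finset_sum _ fun i _ =>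
    continuous_finset_sum _ fun k _ =>
      LAGPC.continuous_dot P ((hxc i).sub (hxc k)) ((hX'c i).sub (hX'c k)))
  have hVderiv : ∀ t : ℝ, 0 ≤ t → HasDerivAt Vfun (V' t) t := by
    intro t ht
    have hsum : HasDerivAt (fun s => ∑ i, ∑ k, (x i s - x k s) ⬝ᵥ P.mulVec (x i s - x k s))
        (∑ i : Fin N, ∑ k : Fin N, ((X' i t - X' k t) ⬝ᵥ P.mulVec (x i t - x k t)
          + (x i t - x k t) ⬝ᵥ P.mulVec (X' i t - X' k t))) t := by
      apply HasDerivAt.fun_sum; intro i _; apply HasDerivAt.fun_sum; intro k _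
      exact LAGPC.hasDerivAt_dot P ((hdx i t ht).sub (hdx k t ht)) ((hdx i t ht).sub (hdx k t ht))
    have hcm := hsum.const_mul ((2*(N:ℝ))⁻¹)
    refine hcm.congr_deriv (Eq.symm ?_)
    have hsy : ∀ i k : Fin N, (X' i t - X' k t) ⬝ᵥ P.mulVec (x i t - x k t)
        = (x i t - x k t) ⬝ᵥ P.mulVec (X' i t - X' k t) := fun i k =>
      LAGPC.dot_symm P hPsymm _ _
    simp only [hsy, ← two_mul, ← Finset.mul_sum]
    rw [eq_comm, ← mul_assoc, show (2*(N:ℝ))⁻¹ * 2 = (N:ℝ)⁻¹ by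
      rw [mul_comm 2 (N:ℝ), mul_inv, mul_assoc, inv_mul_cancel₀ (two_ne_zero), mul_one]]
  -- pointwise estimate on V'
  have hV'le : ∀ t : ℝ, 0 ≤ t → V' t ≤ γ * g t - Φ t := by
    intro t ht
    have hsplit : ∀ i k : Fin N,
        (x i t - x k t) ⬝ᵥ P.mulVec (X' i t - X' k t)
        = (x i t - x k t) ⬝ᵥ (P*A).mulVec (x i t - x k t)
          + (x i t - x k t) ⬝ᵥ S.mulVec (u i t - u k t) := by
      intro i k
      have e1 : X' i t - X' k t
          = A.mulVec (x i t - x k t) + (B * (Bᵀ * P)).mulVec (u i t - u k t) := by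
        rw [hX']
        simp only
        rw [Matrix.mulVec_sub, Matrix.mulVec_sub]
        abel
      rw [e1, Matrix.mulVec_add, dotProduct_add, Matrix.mulVec_mulVec,
        Matrix.mulVec_mulVec]
      congr 2
      rw [hSdef, ← Matrix.mul_assoc, ← Matrix.mul_assoc]
    have hV'eq : V' t
        = (N:ℝ)⁻¹ * (∑ i, ∑ k, (x i t - x k t) ⬝ᵥ (P*A).mulVec (x i t - x k t))
          + (N:ℝ)⁻¹ * (∑ i, ∑ k, (x i t - x k t) ⬝ᵥ S.mulVec (u i t - u k t)) := by
      rw [hV'def]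
      simp only [hsplit, Finset.sum_add_distrib]
      ring
    -- Term 1 : Riccati estimate
    have hT1 : ∀ i k : Fin N, (x i t - x k t) ⬝ᵥ (P*A).mulVec (x i t - x k t)
        ≤ γ/2 * ((x i t - x k t) ⬝ᵥ S.mulVec (x i t - x k t))
          - (x i t - x k t) ⬝ᵥ Q.mulVec (x i t - x k t) := by
      intro i k
      set v := x i t - x k t with hv
      have hr := hRiccati v
      have hexp : v ⬝ᵥ (P * A + Aᵀ * P - γ • S + (2:ℝ) • Q).mulVec v
          = v ⬝ᵥ (P*A).mulVec v + v ⬝ᵥ (Aᵀ*P).mulVec v - γ * (v ⬝ᵥ S.mulVec v)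
            + 2 * (v ⬝ᵥ Q.mulVec v) := by
        simp only [Matrix.add_mulVec, Matrix.sub_mulVec, Matrix.smul_mulVec,
          dotProduct_add, dotProduct_sub, dotProduct_smul, smul_eq_mul]
      have htr : v ⬝ᵥ (Aᵀ*P).mulVec v = v ⬝ᵥ (P*A).mulVec v := by
        have hPA : (P*A)ᵀ = Aᵀ * P := by rw [Matrix.transpose_mul, hPsymm]
        rw [← hPA, LAGPC.quad_transpose]
      rw [hexp, htr] at hr
      linarith
    -- Term 2 : the coupling term is nonpositive
    have hufull : ∀ i : Fin N, u i t = ∑ j, (l i j * w i j t) • (x j t - x i t) := by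
      intro i
      rw [hu]
      exact Finset.sum_erase _ (by simp)
    have husum : (∑ i, u i t) = 0 := by
      simp only [hufull]
      set b : Fin N → Fin N → (Fin d → ℝ) :=
        fun i j => (l i j * w i j t) • (x j t - x i t) with hb
      have hanti : ∀ i j : Fin N, b i j = -(b j i) := by
        intro i j
        by_cases h : i = j
        · subst h; simp [hb]
        · rw [hb]
          simp only
          rw [hlsymm i j, hwsymmT i j h t ht, ← smul_neg, neg_sub]
      have hEq : (∑ i, ∑ j, b i j) = -(∑ i, ∑ j, b i j) := by
        conv_lhs => rw [Finset.sum_comm]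
        calc ∑ j, ∑ i, b i j = ∑ j, ∑ i, -(b j i) := by
              refine Finset.sum_congr rfl fun j _ => Finset.sum_congr rfl fun i _ => hanti i j
          _ = -(∑ i, ∑ j, b i j) := by
              simp only [Finset.sum_neg_distrib]
      have h2 : (2:ℝ) • (∑ i, ∑ j, b i j) = 0 := by
        rw [two_smul]
        nth_rewrite 2 [hEq]
        simp
      have := (smul_eq_zero.mp h2).resolve_left (by norm_num)
      exact this
    have hexp2 : ∀ i k : Fin N, (x i t - x k t) ⬝ᵥ S.mulVec (u i t - u k t)
        = x i t ⬝ᵥ S.mulVec (u i t) - x i t ⬝ᵥ S.mulVec (u k t)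
          - x k t ⬝ᵥ S.mulVec (u i t) + x k t ⬝ᵥ S.mulVec (u k t) := by
      intro i k
      rw [Matrix.mulVec_sub, sub_dotProduct, dotProduct_sub,
        dotProduct_sub]
      ring
    have c1 : (∑ i : Fin N, ∑ _k : Fin N, x i t ⬝ᵥ S.mulVec (u i t))
        = (N:ℝ) * ∑ i, x i t ⬝ᵥ S.mulVec (u i t) := by
      simp [Finset.sum_const, Finset.card_univ, nsmul_eq_mul, Finset.mul_sum]
    have c4 : (∑ _i : Fin N, ∑ k : Fin N, x k t ⬝ᵥ S.mulVec (u k t))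
        = (N:ℝ) * ∑ k, x k t ⬝ᵥ S.mulVec (u k t) := by
      simp [Finset.sum_const, Finset.card_univ, nsmul_eq_mul]
    have c2 : (∑ i : Fin N, ∑ k : Fin N, x i t ⬝ᵥ S.mulVec (u k t)) = 0 := by
      refine Finset.sum_eq_zero fun i _ => ?_
      rw [LAGPC.dot_sum_right, husum, Matrix.mulVec_zero, dotProduct_zero]
    have c3 : (∑ i : Fin N, ∑ k : Fin N, x k t ⬝ᵥ S.mulVec (u i t)) = 0 := by
      have h1 : ∀ i : Fin N, (∑ k : Fin N, x k t ⬝ᵥ S.mulVec (u i t))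
          = (∑ k, x k t) ⬝ᵥ S.mulVec (u i t) := fun i => LAGPC.dot_sum_left S _ _
      simp only [h1]
      rw [LAGPC.dot_sum_right, husum, Matrix.mulVec_zero, dotProduct_zero]
    have e1' : (∑ i, ∑ k, (x i t - x k t) ⬝ᵥ S.mulVec (u i t - u k t))
        = 2 * (N:ℝ) * (∑ i, x i t ⬝ᵥ S.mulVec (u i t)) := by
      simp only [hexp2, Finset.sum_add_distrib, Finset.sum_sub_distrib]
      rw [c1, c2, c3, c4]
      ring
    set a : Fin N → Fin N → ℝ :=
      fun i j => (l i j * w i j t) * (x i t ⬝ᵥ S.mulVec (x j t - x i t)) with ha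
    have e2 : (∑ i, x i t ⬝ᵥ S.mulVec (u i t)) = ∑ i, ∑ j, a i j := by
      refine Finset.sum_congr rfl fun i _ => ?_
      rw [hufull i, ← LAGPC.dot_sum_right]
      refine Finset.sum_congr rfl fun j _ => ?_
      rw [Matrix.mulVec_smul, dotProduct_smul, smul_eq_mul]
    have hpair : ∀ i j : Fin N, a i j + a j i
        = -((l i j * w i j t) * ((x j t - x i t) ⬝ᵥ S.mulVec (x j t - x i t))) := by
      intro i j
      by_cases h : i = j
      · subst h; simp [ha, hldiag]
      · have hsws : l j i * w j i t = l i j * w i j t := by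
          rw [← hlsymm i j, ← hwsymmT i j h t ht]
        rw [ha]
        simp only
        rw [hsws]
        have hq1 : x i t ⬝ᵥ S.mulVec (x j t - x i t)
            = x i t ⬝ᵥ S.mulVec (x j t) - x i t ⬝ᵥ S.mulVec (x i t) := by
          rw [Matrix.mulVec_sub, dotProduct_sub]
        have hq2 : x j t ⬝ᵥ S.mulVec (x i t - x j t)
            = x j t ⬝ᵥ S.mulVec (x i t) - x j t ⬝ᵥ S.mulVec (x j t) := by
          rw [Matrix.mulVec_sub, dotProduct_sub]
        have hq3 : (x j t - x i t) ⬝ᵥ S.mulVec (x j t - x i t)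
            = x j t ⬝ᵥ S.mulVec (x j t) - x j t ⬝ᵥ S.mulVec (x i t)
              - x i t ⬝ᵥ S.mulVec (x j t) + x i t ⬝ᵥ S.mulVec (x i t) := by
          rw [Matrix.mulVec_sub, sub_dotProduct, dotProduct_sub,
            dotProduct_sub]
          ring
        have hsym : x j t ⬝ᵥ S.mulVec (x i t) = x i t ⬝ᵥ S.mulVec (x j t) :=
          LAGPC.dot_symm S hSsymm _ _
        rw [hq1, hq2, hq3, hsym]
        ring
    have hdouble : (∑ i, ∑ j, (a i j + a j i)) = 2 * (∑ i, ∑ j, a i j) := by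
      simp only [Finset.sum_add_distrib]
      have hsc : (∑ i, ∑ j, a j i) = ∑ i, ∑ j, a i j := Finset.sum_comm
      rw [hsc]; ring
    have hsumpair : (∑ i, ∑ j, (a i j + a j i))
        = -∑ i, ∑ j, (l i j * w i j t) * ((x j t - x i t) ⬝ᵥ S.mulVec (x j t - x i t)) := by
      simp only [hpair, Finset.sum_neg_distrib]
    have hkey : (∑ i, ∑ k, (x i t - x k t) ⬝ᵥ S.mulVec (u i t - u k t))
        = - ((N:ℝ) * ∑ i, ∑ j, (l i j * w i j t) *
            ((x j t - x i t) ⬝ᵥ S.mulVec (x j t - x i t))) := by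
      rw [e1']
      rw [e2]
      rw [show 2 * (N:ℝ) * (∑ i, ∑ j, a i j) = (N:ℝ) * (2 * (∑ i, ∑ j, a i j)) from by ring]
      rw [← hdouble, hsumpair]
      ring
    have hwnonneg : ∀ i j : Fin N, 0 ≤ l i j * w i j t := by
      intro i j
      by_cases h : i = j
      · subst h; simp [hldiag]
      · rcases hl01 i j with h0 | h1
        · rw [h0]; simp
        · rw [h1, one_mul]; exact (hwpos i j h t ht).le
    have hT2 : (N:ℝ)⁻¹ * (∑ i, ∑ k, (x i t - x k t) ⬝ᵥ S.mulVec (u i t - u k t)) ≤ 0 := by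
      rw [hkey]
      have hnn : 0 ≤ ∑ i, ∑ j, (l i j * w i j t) *
          ((x j t - x i t) ⬝ᵥ S.mulVec (x j t - x i t)) :=
        Finset.sum_nonneg fun i _ => Finset.sum_nonneg fun j _ =>
          mul_nonneg (hwnonneg i j) (hSpsd _)
      set T := ∑ i, ∑ j, (l i j * w i j t) *
          ((x j t - x i t) ⬝ᵥ S.mulVec (x j t - x i t)) with hT
      calc (N:ℝ)⁻¹ * (-((N:ℝ) * T)) = -((N:ℝ)⁻¹ * (N:ℝ) * T) := by ring
        _ = -T := by rw [inv_mul_cancel₀ hNne, one_mul]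
        _ ≤ 0 := neg_nonpos.2 hnn
    have hT1sum : (N:ℝ)⁻¹ * (∑ i, ∑ k, (x i t - x k t) ⬝ᵥ (P*A).mulVec (x i t - x k t))
        ≤ γ * g t - Φ t := by
      have hle : (∑ i, ∑ k, (x i t - x k t) ⬝ᵥ (P*A).mulVec (x i t - x k t))
          ≤ ∑ i : Fin N, ∑ k : Fin N, (γ/2 * ((x i t - x k t) ⬝ᵥ S.mulVec (x i t - x k t))
            - (x i t - x k t) ⬝ᵥ Q.mulVec (x i t - x k t)) :=
        Finset.sum_le_sum fun i _ => Finset.sum_le_sum fun k _ => hT1 i k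
      have hmul := mul_le_mul_of_nonneg_left hle (inv_nonneg.2 hNpos.le)
      refine le_trans hmul (le_of_eq ?_)
      rw [hgdef, hΦdef]
      simp only
      have hQflip : ∀ i k : Fin N, (x k t - x i t) ⬝ᵥ Q.mulVec (x k t - x i t)
          = (x i t - x k t) ⬝ᵥ Q.mulVec (x i t - x k t) := by
        intro i k
        rw [show x k t - x i t = -(x i t - x k t) from (neg_sub _ _).symm, LAGPC.quad_neg]
      simp only [hQflip]
      simp only [Finset.sum_sub_distrib, ← Finset.mul_sum]
      field_simp
    rw [hV'eq]
    linarith [hT2, hT1sum]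
  -- coercivity constants
  obtain ⟨cP, hcPpos, hcP⟩ := LAGPC.posdef_coercive hd P hP
  obtain ⟨cQ, hcQpos, hcQ⟩ := LAGPC.posdef_coercive hd Q hQ
  have hPquad : ∀ v : Fin d → ℝ, 0 ≤ v ⬝ᵥ P.mulVec v := fun v =>
    le_trans (by positivity) (hcP v)
  have hQquad : ∀ v : Fin d → ℝ, 0 ≤ v ⬝ᵥ Q.mulVec v := fun v =>
    le_trans (by positivity) (hcQ v)
  -- FTC
  have hFTC : ∀ T : ℝ, 0 ≤ T → Vfun T - Vfun 0 = ∫ s in (0:ℝ)..T, V' s := by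
    intro T hT
    rw [eq_comm]
    refine intervalIntegral.integral_eq_sub_of_hasDerivAt ?_ (hV'c.intervalIntegrable 0 T)
    intro s hs
    rw [Set.uIcc_of_le hT] at hs
    exact hVderiv s hs.1
  have hVnonneg : ∀ t : ℝ, 0 ≤ Vfun t := by
    intro t
    rw [hVfun]
    simp only
    refine mul_nonneg (by positivity) ?_
    exact Finset.sum_nonneg fun i _ => Finset.sum_nonneg fun k _ => hPquad _
  have hgnonneg : ∀ t : ℝ, 0 ≤ g t := by
    intro t
    rw [hgdef]
    simp only
    refine mul_nonneg (by positivity) ?_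
    exact Finset.sum_nonneg fun i _ => Finset.sum_nonneg fun k _ => hSpsd _
  have hΦnonneg : ∀ t : ℝ, 0 ≤ Φ t := by
    intro t
    rw [hΦdef]
    simp only
    refine mul_nonneg (by positivity) ?_
    exact Finset.sum_nonneg fun i _ => Finset.sum_nonneg fun k _ => hQquad _
  have hg_int : IntegrableOn g (Set.Ioi (0:ℝ)) := by
    have hsum : IntegrableOn
        (fun t => ∑ i : Fin N, ∑ k : Fin N, (x i t - x k t) ⬝ᵥ S.mulVec (x i t - x k t))
        (Set.Ioi (0:ℝ)) := by
      refine MeasureTheory.integrable_finset_sum _ fun i _ => ?_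
      exact MeasureTheory.integrable_finset_sum _ fun k _ => hgik_int i k
    have := hsum.const_mul ((2*(N:ℝ))⁻¹)
    exact this
  have hGle : ∀ T : ℝ, 0 ≤ T → ∫ s in (0:ℝ)..T, g s ≤ ∫ s in Set.Ioi (0:ℝ), g s := by
    intro T hT
    rw [intervalIntegral.integral_of_le hT]
    refine MeasureTheory.setIntegral_mono_set hg_int ?_ ?_
    · exact (MeasureTheory.ae_restrict_iff' measurableSet_Ioi).2
        (Filter.Eventually.of_forall fun s _ => hgnonneg s)
    · exact HasSubset.Subset.eventuallyLE Set.Ioc_subset_Ioi_self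
  have hmain : ∀ T : ℝ, 0 ≤ T →
      (∫ s in (0:ℝ)..T, Φ s) + Vfun T ≤ Vfun 0 + γ * ∫ s in Set.Ioi (0:ℝ), g s := by
    intro T hT
    have hγg : Continuous (fun s => γ * g s) := continuous_const.mul hgc
    have h1 : ∫ s in (0:ℝ)..T, V' s ≤ ∫ s in (0:ℝ)..T, (γ * g s - Φ s) := by
      refine intervalIntegral.integral_mono_on hT (hV'c.intervalIntegrable _ _)
        ((hγg.sub hΦc).intervalIntegrable _ _) ?_
      intro s hs
      exact hV'le s hs.1
    have h2 : ∫ s in (0:ℝ)..T, (γ * g s - Φ s)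
        = γ * (∫ s in (0:ℝ)..T, g s) - ∫ s in (0:ℝ)..T, Φ s := by
      rw [intervalIntegral.integral_sub (hγg.intervalIntegrable _ _)
        (hΦc.intervalIntegrable _ _), intervalIntegral.integral_const_mul]
    have h3 := hFTC T hT
    have h4 := hGle T hT
    have h5 := mul_le_mul_of_nonneg_left h4 hγ.le
    linarith
  have hΦle : ∀ T : ℝ, 0 ≤ T →
      ∫ s in (0:ℝ)..T, Φ s ≤ Vfun 0 + γ * ∫ s in Set.Ioi (0:ℝ), g s := by
    intro T hT
    have := hmain T hT
    have := hVnonneg T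
    linarith
  have hΦint : IntegrableOn Φ (Set.Ioi (0:ℝ)) := by
    refine MeasureTheory.integrableOn_Ioi_of_intervalIntegral_norm_bounded
      (Vfun 0 + γ * ∫ s in Set.Ioi (0:ℝ), g s) 0
      (fun T => hΦc.integrableOn_Ioc) tendsto_id ?_
    filter_upwards [eventually_ge_atTop (0:ℝ)] with T hT
    simp only [id_eq]
    have hnorm : ∫ s in (0:ℝ)..T, ‖Φ s‖ = ∫ s in (0:ℝ)..T, Φ s := by
      refine intervalIntegral.integral_congr fun s hs => ?_
      rw [Real.norm_eq_abs, abs_of_nonneg (hΦnonneg s)]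
    rw [hnorm]
    exact hΦle T hT
  have hΦtail : ∫ s in Set.Ioi (0:ℝ), Φ s ≤ Vfun 0 + γ * ∫ s in Set.Ioi (0:ℝ), g s := by
    refine le_of_tendsto (MeasureTheory.intervalIntegral_tendsto_integral_Ioi 0 hΦint tendsto_id) ?_
    filter_upwards [eventually_ge_atTop (0:ℝ)] with T hT using hΦle T hT
  -- identification of the Kronecker quadratic forms
  have hkron_g : ∀ t : ℝ, ((fun q : Fin N × Fin d => x q.1 t q.2) ⬝ᵥ
      ((((1 : Matrix (Fin N) (Fin N) ℝ) -
          (N : ℝ)⁻¹ • Matrix.of (fun _ _ : Fin N => (1 : ℝ))) ⊗ₖ S).mulVec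
        (fun q : Fin N × Fin d => x q.1 t q.2))) = g t := by
    intro t
    rw [hgdef]
    exact LAGPC.quad_kron S (fun i => x i t)
  have hkron_P0 : ((fun q : Fin N × Fin d => x q.1 0 q.2) ⬝ᵥ
      ((((1 : Matrix (Fin N) (Fin N) ℝ) -
          (N : ℝ)⁻¹ • Matrix.of (fun _ _ : Fin N => (1 : ℝ))) ⊗ₖ P).mulVec
        (fun q : Fin N × Fin d => x q.1 0 q.2))) = Vfun 0 := by
    rw [hVfun]
    exact LAGPC.quad_kron P (fun i => x i 0)
  -- integrability of the individual Q-quadratics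
  have hfik_le : ∀ (i k : Fin N) (s : ℝ),
      (x k s - x i s) ⬝ᵥ Q.mulVec (x k s - x i s) ≤ (N:ℝ) * Φ s := by
    intro i k s
    have h1 : (x k s - x i s) ⬝ᵥ Q.mulVec (x k s - x i s)
        ≤ ∑ k' : Fin N, (x k' s - x i s) ⬝ᵥ Q.mulVec (x k' s - x i s) :=
      Finset.single_le_sum
        (f := fun k' => (x k' s - x i s) ⬝ᵥ Q.mulVec (x k' s - x i s))
        (fun k' _ => hQquad _) (Finset.mem_univ k)
    have h2 : (∑ k' : Fin N, (x k' s - x i s) ⬝ᵥ Q.mulVec (x k' s - x i s))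
        ≤ ∑ i' : Fin N, ∑ k' : Fin N, (x k' s - x i' s) ⬝ᵥ Q.mulVec (x k' s - x i' s) :=
      Finset.single_le_sum
        (f := fun i' => ∑ k' : Fin N, (x k' s - x i' s) ⬝ᵥ Q.mulVec (x k' s - x i' s))
        (fun i' _ => Finset.sum_nonneg fun k' _ => hQquad _) (Finset.mem_univ i)
    have h3 : (N:ℝ) * Φ s
        = ∑ i' : Fin N, ∑ k' : Fin N, (x k' s - x i' s) ⬝ᵥ Q.mulVec (x k' s - x i' s) := by
      rw [hΦdef]
      simp only
      rw [← mul_assoc, mul_inv_cancel₀ hNne, one_mul]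
    linarith
  have hfik_int : ∀ i k : Fin N, IntegrableOn
      (fun t => (x k t - x i t) ⬝ᵥ Q.mulVec (x k t - x i t)) (Set.Ioi (0:ℝ)) := by
    intro i k
    refine Integrable.mono' (hΦint.const_mul (N:ℝ)) ?_ ?_
    · exact (LAGPC.continuous_dot Q ((hxc k).sub (hxc i)) ((hxc k).sub (hxc i))).aestronglyMeasurable
    · refine (MeasureTheory.ae_restrict_iff' measurableSet_Ioi).2
        (Filter.Eventually.of_forall fun s _ => ?_)
      rw [Real.norm_eq_abs, abs_of_nonneg (hQquad _)]
      exact hfik_le i k s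
  -- the guaranteed-performance inequality
  have hsum_int : (∑ i : Fin N, ∑ k : Fin N,
      ∫ t in Set.Ici (0:ℝ), (x k t - x i t) ⬝ᵥ Q.mulVec (x k t - x i t))
      = (N:ℝ) * ∫ s in Set.Ioi (0:ℝ), Φ s := by
    have e0 : ∀ i k : Fin N,
        (∫ t in Set.Ici (0:ℝ), (x k t - x i t) ⬝ᵥ Q.mulVec (x k t - x i t))
        = ∫ t in Set.Ioi (0:ℝ), (x k t - x i t) ⬝ᵥ Q.mulVec (x k t - x i t) := fun i k =>
      MeasureTheory.integral_Ici_eq_integral_Ioi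
    simp only [e0]
    have e1 : ∀ i : Fin N,
        (∑ k : Fin N, ∫ t in Set.Ioi (0:ℝ), (x k t - x i t) ⬝ᵥ Q.mulVec (x k t - x i t))
        = ∫ t in Set.Ioi (0:ℝ), ∑ k : Fin N, (x k t - x i t) ⬝ᵥ Q.mulVec (x k t - x i t) :=
      fun i => (MeasureTheory.integral_finset_sum _ (fun k _ => hfik_int i k)).symm
    simp only [e1]
    rw [← MeasureTheory.integral_finset_sum _ (fun i (_ : i ∈ Finset.univ) =>
      MeasureTheory.integrable_finset_sum (μ := volume.restrict (Set.Ioi (0:ℝ)))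
        Finset.univ (fun k _ => hfik_int i k))]
    have e2 : ∀ t : ℝ, (∑ i : Fin N, ∑ k : Fin N,
        (x k t - x i t) ⬝ᵥ Q.mulVec (x k t - x i t)) = (N:ℝ) * Φ t := by
      intro t
      rw [hΦdef]
      simp only
      rw [← mul_assoc, mul_inv_cancel₀ hNne, one_mul]
    simp only [e2]
    exact MeasureTheory.integral_const_mul _ _
  have hIg : (∫ t in Set.Ici (0:ℝ), ((fun q : Fin N × Fin d => x q.1 t q.2) ⬝ᵥ
      ((((1 : Matrix (Fin N) (Fin N) ℝ) -
          (N : ℝ)⁻¹ • Matrix.of (fun _ _ : Fin N => (1 : ℝ))) ⊗ₖ S).mulVec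
        (fun q : Fin N × Fin d => x q.1 t q.2))))
      = ∫ s in Set.Ioi (0:ℝ), g s := by
    simp only [hkron_g]
    exact MeasureTheory.integral_Ici_eq_integral_Ioi
  refine ⟨?_, ?_, ?_, ?_⟩
  · -- part (i) : consensus
    have hVbd : ∀ t : ℝ, 0 ≤ t → Vfun t ≤ Vfun 0 + γ * ∫ s in Set.Ioi (0:ℝ), g s := by
      intro t ht
      have h1 := hmain t ht
      have h2 : 0 ≤ ∫ s in (0:ℝ)..t, Φ s :=
        intervalIntegral.integral_nonneg ht (fun s _ => hΦnonneg s)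
      linarith
    obtain ⟨Vm, hVm⟩ : ∃ v : ℝ, v = Vfun 0 + γ * ∫ s in Set.Ioi (0:ℝ), g s := ⟨_, rfl⟩
    have hVbd' : ∀ t : ℝ, 0 ≤ t → Vfun t ≤ Vm := by
      intro t ht; rw [hVm]; exact hVbd t ht
    have hVm0 : 0 ≤ Vm := le_trans (hVnonneg 0) (hVbd' 0 le_rfl)
    obtain ⟨D2, hD2⟩ : ∃ v : ℝ, v = 2 * (N:ℝ) * Vm / cP := ⟨_, rfl⟩
    have hD2nn : 0 ≤ D2 := by
      rw [hD2]; exact div_nonneg (mul_nonneg (by positivity) hVm0) hcPpos.le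
    obtain ⟨D, hD⟩ : ∃ v : ℝ, v = Real.sqrt D2 := ⟨_, rfl⟩
    have hDnn : 0 ≤ D := by rw [hD]; exact Real.sqrt_nonneg _
    have hδbd : ∀ (a b : Fin N) (t : ℝ), 0 ≤ t → ‖x a t - x b t‖ ≤ D := by
      intro a b t ht
      have h1 : (x a t - x b t) ⬝ᵥ P.mulVec (x a t - x b t)
          ≤ ∑ a' : Fin N, ∑ b' : Fin N, (x a' t - x b' t) ⬝ᵥ P.mulVec (x a' t - x b' t) := by
        have ha := Finset.single_le_sum
          (f := fun b' => (x a t - x b' t) ⬝ᵥ P.mulVec (x a t - x b' t))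
          (fun b' _ => hPquad _) (Finset.mem_univ b)
        have hb := Finset.single_le_sum
          (f := fun a' => ∑ b' : Fin N, (x a' t - x b' t) ⬝ᵥ P.mulVec (x a' t - x b' t))
          (fun a' _ => Finset.sum_nonneg fun b' _ => hPquad _) (Finset.mem_univ a)
        linarith
      have h2 : (∑ a' : Fin N, ∑ b' : Fin N, (x a' t - x b' t) ⬝ᵥ P.mulVec (x a' t - x b' t))
          = 2 * (N:ℝ) * Vfun t := by
        rw [hVfun]
        simp only
        rw [← mul_assoc, mul_inv_cancel₀ (by positivity : (2*(N:ℝ)) ≠ 0), one_mul]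
      have h3 := hcP (x a t - x b t)
      have h4 := hVbd' t ht
      have h5 : cP * ‖x a t - x b t‖^2 ≤ 2*(N:ℝ)*Vm := by
        nlinarith [hNpos]
      have h6 : ‖x a t - x b t‖^2 ≤ D2 := by
        rw [hD2, le_div_iff₀ hcPpos]
        linarith
      calc ‖x a t - x b t‖ = Real.sqrt (‖x a t - x b t‖^2) := (Real.sqrt_sq (norm_nonneg _)).symm
        _ ≤ D := by rw [hD]; exact Real.sqrt_le_sqrt h6
    have hlw : ∀ (a b : Fin N) (t : ℝ), 0 ≤ t → a ≠ b →
        |l a b * w a b t| ≤ max (Cw a b) 0 := by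
      intro a b t ht hab
      have hnn : 0 ≤ l a b * w a b t := by
        rcases hl01 a b with h0 | h1
        · rw [h0]; simp
        · rw [h1, one_mul]; exact (hwpos a b hab t ht).le
      rw [abs_of_nonneg hnn]
      rcases hl01 a b with h0 | h1
      · rw [h0, zero_mul]
        exact le_max_right _ 0
      · rw [h1, one_mul]
        exact le_trans (hCw a b t ht hab) (le_max_left _ _)
    obtain ⟨CM, hCM⟩ : ∃ v : ℝ, v = ∑ a : Fin N, ∑ b : Fin N, max (Cw a b) 0 := ⟨_, rfl⟩
    have hCMnn : 0 ≤ CM := by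
      rw [hCM]
      exact Finset.sum_nonneg fun a _ => Finset.sum_nonneg fun b _ => le_max_right _ 0
    have hubd : ∀ (a : Fin N) (t : ℝ), 0 ≤ t → ‖u a t‖ ≤ CM * D := by
      intro a t ht
      rw [hu]
      simp only
      refine le_trans (norm_sum_le _ _) ?_
      have hterm : ∀ b ∈ Finset.univ.erase a,
          ‖(l a b * w a b t) • (x b t - x a t)‖ ≤ max (Cw a b) 0 * D := by
        intro b hb
        have hab : a ≠ b := fun h => (Finset.mem_erase.1 hb).1 h.symm
        rw [norm_smul, Real.norm_eq_abs]
        exact mul_le_mul (hlw a b t ht hab) (hδbd b a t ht) (norm_nonneg _) (le_max_right _ 0)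
      refine le_trans (Finset.sum_le_sum hterm) ?_
      rw [← Finset.sum_mul, hCM]
      refine mul_le_mul_of_nonneg_right ?_ hDnn
      refine le_trans
        (Finset.sum_le_sum_of_subset_of_nonneg (Finset.subset_univ _)
          (fun b _ _ => le_max_right _ 0)) ?_
      exact Finset.single_le_sum
        (f := fun a' => ∑ b : Fin N, max (Cw a' b) 0)
        (fun a' _ => Finset.sum_nonneg fun b _ => le_max_right _ 0) (Finset.mem_univ a)
    obtain ⟨KA, hKA0, hKA⟩ := LAGPC.mulVec_norm_bound A
    obtain ⟨KB, hKB0, hKB⟩ := LAGPC.mulVec_norm_bound (B * (Bᵀ * P))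
    obtain ⟨KQ, hKQ0, hKQ⟩ := LAGPC.mulVec_norm_bound Q
    obtain ⟨E, hE⟩ : ∃ v : ℝ, v = KA * D + 2 * (KB * (CM * D)) := ⟨_, rfl⟩
    have hEnn : 0 ≤ E := by
      have h1 := mul_nonneg hKA0 hDnn
      have h2 := mul_nonneg hKB0 (mul_nonneg hCMnn hDnn)
      rw [hE]; linarith
    have hX'bd : ∀ (a b : Fin N) (t : ℝ), 0 ≤ t → ‖X' a t - X' b t‖ ≤ E := by
      intro a b t ht
      have e1 : X' a t - X' b t = A.mulVec (x a t - x b t)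
          + ((B * (Bᵀ * P)).mulVec (u a t) - (B * (Bᵀ * P)).mulVec (u b t)) := by
        rw [hX']
        simp only
        rw [Matrix.mulVec_sub]
        abel
      rw [e1]
      refine le_trans (norm_add_le _ _) ?_
      have t1 : ‖A.mulVec (x a t - x b t)‖ ≤ KA * D :=
        le_trans (hKA _) (mul_le_mul_of_nonneg_left (hδbd a b t ht) hKA0)
      have t2 : ‖(B * (Bᵀ * P)).mulVec (u a t) - (B * (Bᵀ * P)).mulVec (u b t)‖
          ≤ 2 * (KB * (CM*D)) := by
        refine le_trans (norm_sub_le _ _) ?_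
        have ta := le_trans (hKB (u a t)) (mul_le_mul_of_nonneg_left (hubd a t ht) hKB0)
        have tb := le_trans (hKB (u b t)) (mul_le_mul_of_nonneg_left (hubd b t ht) hKB0)
        linarith
      rw [hE]; linarith
    intro i k
    obtain ⟨f, hf⟩ : ∃ f : ℝ → ℝ,
        f = fun t => (x k t - x i t) ⬝ᵥ Q.mulVec (x k t - x i t) := ⟨_, rfl⟩
    obtain ⟨L, hL⟩ : ∃ v : ℝ, v = (d:ℝ) * E * (KQ * D) + (d:ℝ) * D * (KQ * E) + 1 := ⟨_, rfl⟩
    have hb1nn : 0 ≤ (d:ℝ) * E * (KQ * D) :=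
      mul_nonneg (mul_nonneg (Nat.cast_nonneg d) hEnn) (mul_nonneg hKQ0 hDnn)
    have hb2nn : 0 ≤ (d:ℝ) * D * (KQ * E) :=
      mul_nonneg (mul_nonneg (Nat.cast_nonneg d) hDnn) (mul_nonneg hKQ0 hEnn)
    have hLpos : 0 < L := by rw [hL]; linarith
    have hfd : ∀ t : ℝ, 0 ≤ t → HasDerivAt f
        ((X' k t - X' i t) ⬝ᵥ Q.mulVec (x k t - x i t)
          + (x k t - x i t) ⬝ᵥ Q.mulVec (X' k t - X' i t)) t := by
      intro t ht
      rw [hf]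
      exact LAGPC.hasDerivAt_dot Q ((hdx k t ht).sub (hdx i t ht)) ((hdx k t ht).sub (hdx i t ht))
    have hf'bd : ∀ t : ℝ, 0 ≤ t →
        ‖(X' k t - X' i t) ⬝ᵥ Q.mulVec (x k t - x i t)
          + (x k t - x i t) ⬝ᵥ Q.mulVec (X' k t - X' i t)‖ ≤ L := by
      intro t ht
      rw [Real.norm_eq_abs]
      refine le_trans (abs_add_le _ _) ?_
      have b1 : |(X' k t - X' i t) ⬝ᵥ Q.mulVec (x k t - x i t)| ≤ (d:ℝ) * E * (KQ * D) := by
        refine le_trans (LAGPC.abs_dot_le _ _) ?_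
        have hq : ‖Q.mulVec (x k t - x i t)‖ ≤ KQ * D :=
          le_trans (hKQ _) (mul_le_mul_of_nonneg_left (hδbd k i t ht) hKQ0)
        exact mul_le_mul (mul_le_mul_of_nonneg_left (hX'bd k i t ht) (Nat.cast_nonneg d)) hq
          (norm_nonneg _) (mul_nonneg (Nat.cast_nonneg d) hEnn)
      have b2 : |(x k t - x i t) ⬝ᵥ Q.mulVec (X' k t - X' i t)| ≤ (d:ℝ) * D * (KQ * E) := by
        refine le_trans (LAGPC.abs_dot_le _ _) ?_
        have hq : ‖Q.mulVec (X' k t - X' i t)‖ ≤ KQ * E :=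
          le_trans (hKQ _) (mul_le_mul_of_nonneg_left (hX'bd k i t ht) hKQ0)
        exact mul_le_mul (mul_le_mul_of_nonneg_left (hδbd k i t ht) (Nat.cast_nonneg d)) hq
          (norm_nonneg _) (mul_nonneg (Nat.cast_nonneg d) hDnn)
      rw [hL]; linarith
    have hlip : ∀ s t : ℝ, 0 ≤ s → 0 ≤ t → |f s - f t| ≤ L * |s - t| := by
      intro s t hs htt
      have := Convex.norm_image_sub_le_of_norm_hasDerivWithin_le (C := L)
        (fun r hr => (hfd r hr).hasDerivWithinAt) (fun r hr => hf'bd r hr)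
        (convex_Ici 0) (htt : t ∈ Set.Ici 0) (hs : s ∈ Set.Ici 0)
      simpa [Real.norm_eq_abs] using this
    have hfnn : ∀ t : ℝ, 0 ≤ t → 0 ≤ f t := by
      intro t _
      rw [hf]
      exact hQquad _
    have hfint : IntegrableOn f (Set.Ioi (0:ℝ)) := by
      rw [hf]; exact hfik_int i k
    have hbarb := LAGPC.barbalat f hfnn L hLpos hlip hfint
    rw [tendsto_zero_iff_norm_tendsto_zero]
    have hub : ∀ᶠ t in atTop, ‖x i t - x k t‖ ≤ Real.sqrt (f t / cQ) := by
      filter_upwards [eventually_ge_atTop (0:ℝ)] with t ht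
      have h1 := hcQ (x k t - x i t)
      have h2 : ‖x i t - x k t‖^2 ≤ f t / cQ := by
        rw [norm_sub_rev, le_div_iff₀ hcQpos]
        simp only [hf]
        nlinarith
      calc ‖x i t - x k t‖ = Real.sqrt (‖x i t - x k t‖^2) :=
            (Real.sqrt_sq (norm_nonneg _)).symm
        _ ≤ Real.sqrt (f t / cQ) := Real.sqrt_le_sqrt h2
    have hlim : Tendsto (fun t => Real.sqrt (f t / cQ)) atTop (nhds 0) := by
      have h1 : Tendsto (fun t => f t / cQ) atTop (nhds 0) := by
        simpa using hbarb.div_const cQ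
      have h2 := (Real.continuous_sqrt.tendsto 0).comp h1
      simpa [Function.comp_def] using h2
    exact tendsto_of_tendsto_of_tendsto_of_le_of_le'
      tendsto_const_nhds hlim (Filter.Eventually.of_forall fun t => norm_nonneg _) hub
  · -- part (ii) : integrability of the Kronecker quadratic
    have : IntegrableOn g (Set.Ici (0:ℝ)) := (integrableOn_Ici_iff_integrableOn_Ioi enorm_ne_top).2 hg_int
    refine this.congr_fun (fun t _ => (hkron_g t).symm) measurableSet_Ici
  · -- part (iii) : integrability of each Q-quadratic
    intro i k
    exact (integrableOn_Ici_iff_integrableOn_Ioi enorm_ne_top).2 (hfik_int i k)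
  · -- part (iv) : the performance bound
    rw [hsum_int, hkron_P0, hIg, ← mul_assoc, inv_mul_cancel₀ hNne, one_mul]
    exact hΦtail
end

section
/- (Corollary 2, consensus function of the leaderless closed loop.) Let N ≥ 2, d, p be positive integers, A ∈ ℝ^{d×d}, B ∈ ℝ^{d×p}, K_u ∈ ℝ^{p×d}. Let l : {1,…,N}² → {0,1} satisfy l_{ii} = 0 and l_{ik} = l_{ki}, and let w_{ik} : ℝ → ℝ be continuous functions with w_{ik}(t) = w_{ki}(t) for all t. Let x_i : ℝ → ℝ^d (i = 1,…,N) be differentiable with ẋ_i(t) = A x_i(t) + B K_u ∑_{k≠i} l_{ik} w_{ik}(t)(x_k(t) − x_i(t)) for all t ≥ 0. If the system achieves consensus, i.e. x_i(t) − x_k(t) → 0 as t → +∞ for all i, k, then for every i, x_i(t) − e^{At}·((1/N)∑_{j=1}^N x_j(0)) → 0 as t → +∞, where e^{At} is the matrix exponential of tA. -/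
open Matrix Filter NormedSpace

lemma matrix_linear_ode {d : ℕ} (A : Matrix (Fin d) (Fin d) ℝ) (y : ℝ → Fin d → ℝ)
    (hy : Differentiable ℝ y)
    (hdy : ∀ t : ℝ, 0 ≤ t → HasDerivAt y (A.mulVec (y t)) t) :
    ∀ t : ℝ, 0 ≤ t → y t = (NormedSpace.exp (t • A)).mulVec (y 0) := by
  letI : SeminormedRing (Matrix (Fin d) (Fin d) ℝ) := Matrix.linftyOpSemiNormedRing
  letI : NormedRing (Matrix (Fin d) (Fin d) ℝ) := Matrix.linftyOpNormedRing
  letI : NormedAlgebra ℝ (Matrix (Fin d) (Fin d) ℝ) := Matrix.linftyOpNormedAlgebra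
  -- the bilinear multiplication as a CLM-valued map
  let L : Matrix (Fin d) (Fin d) ℝ →L[ℝ] ((Fin d → ℝ) →L[ℝ] (Fin d → ℝ)) :=
    LinearMap.toContinuousLinearMap
      { toFun := fun M => LinearMap.toContinuousLinearMap M.mulVecLin,
        map_add' := fun M N => by
          ext v j
          simp [Matrix.add_mulVec],
        map_smul' := fun c M => by
          ext v j
          simp [Matrix.smul_mulVec] }
  have hL : ∀ M v, L M v = M.mulVec v := fun M v => rfl
  have hE : ∀ s : ℝ, HasDerivAt (fun u : ℝ => NormedSpace.exp (u • (-A))) (NormedSpace.exp (s • (-A)) * (-A)) s :=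
    fun s => hasDerivAt_exp_smul_const (-A) s
  have hLE : ∀ s : ℝ, HasDerivAt (fun u : ℝ => L (NormedSpace.exp (u • (-A)))) (L (NormedSpace.exp (s • (-A)) * (-A))) s :=
    fun s => (L.hasFDerivAt.comp_hasDerivAt s (hE s))
  set g : ℝ → Fin d → ℝ := fun s => L (NormedSpace.exp (s • (-A))) (y s) with hg
  have hgd : ∀ s : ℝ, 0 ≤ s → HasDerivAt g 0 s := by
    intro s hs
    have h := (hLE s).clm_apply (hdy s hs)
    have hzero : L (NormedSpace.exp (s • (-A)) * (-A)) (y s) + L (NormedSpace.exp (s • (-A))) (A.mulVec (y s)) = 0 := by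
      rw [hL, hL, Matrix.mulVec_mulVec, Matrix.mul_neg, Matrix.neg_mulVec, neg_add_cancel]
    rwa [hzero] at h
  have hgc : Continuous g := by
    rw [continuous_iff_continuousAt]
    intro s
    exact ((hLE s).clm_apply ((hy s).hasDerivAt)).continuousAt
  intro t ht
  have hconst : g t = g 0 := by
    refine constant_of_has_deriv_right_zero (a := 0) (b := t) (hgc.continuousOn) (fun s hs => ((hgd s hs.1).hasDerivWithinAt)) t ?_
    exact ⟨ht, le_refl t⟩
  have hg0 : g 0 = y 0 := by
    simp only [hg, hL, zero_smul, NormedSpace.exp_zero, Matrix.one_mulVec]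
  have hgt : (NormedSpace.exp (t • (-A))).mulVec (y t) = y 0 := by
    exact hconst.trans hg0
  have hcomm : Commute (t • A) (t • (-A)) := by
    rw [smul_neg]
    exact (Commute.refl (t • A)).neg_right
  have hmul : NormedSpace.exp (t • A) * NormedSpace.exp (t • (-A)) = 1 := by
    rw [← Matrix.exp_add_of_commute _ _ hcomm]
    rw [smul_neg, add_neg_cancel, NormedSpace.exp_zero]
  calc y t = (NormedSpace.exp (t • A) * NormedSpace.exp (t • (-A))).mulVec (y t) := by rw [hmul, Matrix.one_mulVec]
    _ = (NormedSpace.exp (t • A)).mulVec ((NormedSpace.exp (t • (-A))).mulVec (y t)) := by rw [← Matrix.mulVec_mulVec]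
    _ = (NormedSpace.exp (t • A)).mulVec (y 0) := by rw [hgt]

/-- Corollary 2 (consensus function of the leaderless closed loop). -/
theorem leaderless_consensus_function
    (N d p : ℕ) (hN : 2 ≤ N) (hd : 0 < d) (hp : 0 < p)
    (A : Matrix (Fin d) (Fin d) ℝ) (B : Matrix (Fin d) (Fin p) ℝ)
    (Ku : Matrix (Fin p) (Fin d) ℝ)
    (l : Fin N → Fin N → ℝ)
    (hl01 : ∀ i k, l i k = 0 ∨ l i k = 1)
    (hldiag : ∀ i, l i i = 0)
    (hlsymm : ∀ i k, l i k = l k i)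
    (w : Fin N → Fin N → ℝ → ℝ)
    (hwcont : ∀ i k, Continuous (w i k))
    (hwsymm : ∀ i k, ∀ t : ℝ, w i k t = w k i t)
    (x : Fin N → ℝ → (Fin d → ℝ))
    (hx : ∀ i, Differentiable ℝ (x i))
    (hdynx : ∀ i, ∀ t : ℝ, 0 ≤ t →
      HasDerivAt (x i)
        (A.mulVec (x i t) +
          (B * Ku).mulVec (∑ k ∈ Finset.univ.erase i, (l i k * w i k t) • (x k t - x i t))) t)
    (hconsensus : ∀ i k, Tendsto (fun t => x i t - x k t) atTop (nhds 0)) :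
    ∀ i, Tendsto
      (fun t : ℝ => x i t -
        (NormedSpace.exp (t • A)).mulVec ((N : ℝ)⁻¹ • ∑ j : Fin N, x j 0))
      atTop (nhds 0) := by
  have hN0 : (N : ℝ) ≠ 0 := Nat.cast_ne_zero.mpr (by omega)
  set y : ℝ → Fin d → ℝ := fun t => (N : ℝ)⁻¹ • ∑ j : Fin N, x j t with hy
  -- cancellation of the coupling terms
  have hcancel : ∀ t : ℝ,
      (∑ j : Fin N, ∑ k ∈ Finset.univ.erase j, (l j k * w j k t) • (x k t - x j t))
        = (0 : Fin d → ℝ) := by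
    intro t
    have hfull : ∀ j : Fin N, ∑ k ∈ Finset.univ.erase j, (l j k * w j k t) • (x k t - x j t)
        = ∑ k : Fin N, (l j k * w j k t) • (x k t - x j t) := by
      intro j
      refine Finset.sum_erase _ ?_
      simp [hldiag j]
    simp_rw [hfull]
    set S := ∑ j : Fin N, ∑ k : Fin N, (l j k * w j k t) • (x k t - x j t) with hS
    have hkey : S = -S := by
      calc S = ∑ j : Fin N, ∑ k : Fin N, -((l k j * w k j t) • (x j t - x k t)) := by
              refine Finset.sum_congr rfl fun j _ => Finset.sum_congr rfl fun k _ => ?_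
              rw [hlsymm j k, hwsymm j k t, ← smul_neg, neg_sub]
        _ = ∑ k : Fin N, ∑ j : Fin N, -((l k j * w k j t) • (x j t - x k t)) := Finset.sum_comm
        _ = -S := by rw [hS]; simp [← Finset.sum_neg_distrib]
    have h2 : (2 : ℝ) • S = 0 := by
      rw [two_smul]
      nth_rewrite 2 [hkey]
      exact add_neg_cancel S
    have := smul_eq_zero.mp h2
    simpa using this.resolve_left (by norm_num)
  -- y satisfies the linear ODE
  have hyd : Differentiable ℝ y := by
    apply Differentiable.fun_const_smul
    exact Differentiable.fun_sum (fun j _ => hx j)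
  have hydy : ∀ t : ℝ, 0 ≤ t → HasDerivAt y (A.mulVec (y t)) t := by
    intro t ht
    have hsum : HasDerivAt (fun s => ∑ j : Fin N, x j s)
        (∑ j : Fin N, (A.mulVec (x j t) +
          (B * Ku).mulVec (∑ k ∈ Finset.univ.erase j, (l j k * w j k t) • (x k t - x j t)))) t :=
      HasDerivAt.fun_sum (fun j _ => hdynx j t ht)
    have heq : (∑ j : Fin N, (A.mulVec (x j t) +
          (B * Ku).mulVec (∑ k ∈ Finset.univ.erase j, (l j k * w j k t) • (x k t - x j t))))
        = A.mulVec (∑ j : Fin N, x j t) := by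
      rw [Finset.sum_add_distrib]
      simp only [← Matrix.mulVecLin_apply, ← map_sum]
      rw [hcancel t]
      simp
    rw [heq] at hsum
    have := hsum.const_smul ((N : ℝ)⁻¹)
    have hAy : (N : ℝ)⁻¹ • (A.mulVec (∑ j : Fin N, x j t)) = A.mulVec (y t) := by
      rw [hy]
      simp [Matrix.mulVec_smul]
    rw [hAy] at this
    exact this
  have hode := matrix_linear_ode A y hyd hydy
  intro i
  have hiy : Tendsto (fun t => x i t - y t) atTop (nhds 0) := by
    have hrw : ∀ t : ℝ, x i t - y t = (N : ℝ)⁻¹ • ∑ k : Fin N, (x i t - x k t) := by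
      intro t
      rw [Finset.sum_sub_distrib, smul_sub, Finset.sum_const, Finset.card_univ,
        Fintype.card_fin, hy]
      have : (N : ℝ)⁻¹ • (N • x i t) = x i t := by
        rw [← Nat.cast_smul_eq_nsmul ℝ, smul_smul, inv_mul_cancel₀ hN0, one_smul]
      rw [this]
    have h0 : Tendsto (fun t => ∑ k : Fin N, (x i t - x k t)) atTop (nhds 0) := by
      have := tendsto_finset_sum Finset.univ (fun k _ => hconsensus i k)
      simpa using this
    have := h0.const_smul ((N : ℝ)⁻¹)
    rw [smul_zero] at this
    exact Tendsto.congr (fun t => (hrw t).symm) this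
  have hev : (fun t : ℝ => x i t - (NormedSpace.exp (t • A)).mulVec ((N : ℝ)⁻¹ • ∑ j : Fin N, x j 0))
      =ᶠ[atTop] (fun t => x i t - y t) := by
    filter_upwards [eventually_ge_atTop (0 : ℝ)] with t ht
    rw [← hode t ht]
  exact Tendsto.congr' hev.symm hiy
end

section
/- (Hurwitz property of the translated closed-loop modes.) Let d, p be positive integers, A ∈ ℝ^{d×d}, B ∈ ℝ^{d×p}, let Q, P ∈ ℝ^{d×d} be symmetric positive definite, let γ > 0, and suppose PA + AᵀP − γPBBᵀP + 2Q is negative semidefinite. Then for every real μ with μ ≥ γ/2, the matrix A − μBBᵀP is Hurwitz: every eigenvalue λ ∈ ℂ of the complexification of A − μBBᵀP satisfies Re(λ) < 0. -/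
open Matrix

private lemma re_quad_form {d : ℕ} (R : Matrix (Fin d) (Fin d) ℝ) (v : Fin d → ℂ) :
    (star v ⬝ᵥ (R.map Complex.ofReal).mulVec v).re
      = (fun i => (v i).re) ⬝ᵥ R.mulVec (fun i => (v i).re)
      + (fun i => (v i).im) ⬝ᵥ R.mulVec (fun i => (v i).im) := by
  simp only [dotProduct, mulVec, map_apply, Pi.star_apply, Finset.mul_sum, Complex.re_sum,
    Complex.mul_re, Complex.mul_im, Complex.ofReal_re, Complex.ofReal_im, RCLike.star_def,
    Complex.conj_re, Complex.conj_im]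
  rw [← Finset.sum_add_distrib]
  refine Finset.sum_congr rfl fun i _ => ?_
  rw [← Finset.sum_add_distrib]
  refine Finset.sum_congr rfl fun j _ => ?_
  ring

private lemma exists_eigenvector {d : ℕ} (M : Matrix (Fin d) (Fin d) ℂ) (lam : ℂ)
    (h : lam ∈ spectrum ℂ M) : ∃ v : Fin d → ℂ, v ≠ 0 ∧ M.mulVec v = lam • v := by
  rw [← AlgEquiv.spectrum_eq (Matrix.toLinAlgEquiv' : Matrix (Fin d) (Fin d) ℂ ≃ₐ[ℂ] _),
    ← Module.End.hasEigenvalue_iff_mem_spectrum] at h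
  obtain ⟨v, hv⟩ := h.exists_hasEigenvector
  exact ⟨v, hv.2, by simpa using hv.1⟩

private lemma mulVec_star_real {d : ℕ} (M : Matrix (Fin d) (Fin d) ℝ) (v : Fin d → ℂ) :
    (M.map Complex.ofReal).mulVec (star v) = star ((M.map Complex.ofReal).mulVec v) := by
  funext i
  simp only [mulVec, dotProduct, map_apply, Pi.star_apply, star_sum, star_mul',
    Complex.star_def, Complex.conj_ofReal]

/-- Hurwitz property of the translated closed-loop modes: if
`PA + AᵀP - γ P B Bᵀ P + 2Q ⪯ 0` with `P, Q ≻ 0` and `γ > 0`, then for every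
`μ ≥ γ/2` the matrix `A - μ B Bᵀ P` is Hurwitz. -/
theorem translated_closed_loop_hurwitz
    (d p : ℕ) (hd : 0 < d) (hp : 0 < p)
    (A : Matrix (Fin d) (Fin d) ℝ) (B : Matrix (Fin d) (Fin p) ℝ)
    (Q : Matrix (Fin d) (Fin d) ℝ) (hQ : Q.PosDef)
    (P : Matrix (Fin d) (Fin d) ℝ) (hP : P.PosDef)
    (γ : ℝ) (hγ : 0 < γ)
    (hRiccati : ∀ v : Fin d → ℝ,
      v ⬝ᵥ (P * A + Aᵀ * P - γ • (P * B * Bᵀ * P) + (2 : ℝ) • Q).mulVec v ≤ 0) :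
    ∀ μ : ℝ, γ / 2 ≤ μ →
      ∀ lam ∈ spectrum ℂ ((A - μ • (B * Bᵀ * P)).map (Complex.ofReal)),
        lam.re < 0 := by
  intro μ hμ lam hlam
  set M : Matrix (Fin d) (Fin d) ℝ := A - μ • (B * Bᵀ * P) with hM
  obtain ⟨v, hv0, hv⟩ := exists_eigenvector _ lam hlam
  have hPsymm : Pᵀ = P := hP.1
  -- the Lyapunov matrix R = P M + Mᵀ P
  set R : Matrix (Fin d) (Fin d) ℝ := P * M + Mᵀ * P with hR
  -- decomposition of R
  have hRdecomp : R = (P * A + Aᵀ * P - γ • (P * B * Bᵀ * P) + (2 : ℝ) • Q)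
      + (γ - 2 * μ) • (P * B * B ᵀ * P) - (2 : ℝ) • Q := by
    have hMT : Mᵀ = Aᵀ - μ • (P * B * Bᵀ) := by
      simp [hM, transpose_add, transpose_sub, transpose_smul, transpose_mul, hPsymm,
        Matrix.mul_assoc]
    rw [hR, hMT, hM]
    simp only [Matrix.mul_sub, Matrix.sub_mul, Matrix.mul_smul, Matrix.smul_mul, smul_smul,
      sub_smul, Matrix.mul_assoc]
    module
  -- real quadratic bound: wᵀ R w ≤ -2 wᵀ Q w
  have hquad : ∀ w : Fin d → ℝ, w ⬝ᵥ R.mulVec w ≤ -2 * (w ⬝ᵥ Q.mulVec w) := by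
    intro w
    have h1 := hRiccati w
    have h2 : 0 ≤ w ⬝ᵥ (P * B * Bᵀ * P).mulVec w := by
      have : P * B * Bᵀ * P = (Bᵀ * P)ᵀ * (Bᵀ * P) := by
        simp [transpose_mul, hPsymm, Matrix.mul_assoc]
      rw [this, ← Matrix.mulVec_mulVec, dotProduct_mulVec, vecMul_transpose]
      exact Finset.sum_nonneg fun i _ => mul_self_nonneg _
    have h3 : (γ - 2 * μ) * (w ⬝ᵥ (P * B * Bᵀ * P).mulVec w) ≤ 0 :=
      mul_nonpos_of_nonpos_of_nonneg (by linarith) h2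
    calc w ⬝ᵥ R.mulVec w
        = w ⬝ᵥ (P * A + Aᵀ * P - γ • (P * B * Bᵀ * P) + (2 : ℝ) • Q).mulVec w
          + (γ - 2 * μ) * (w ⬝ᵥ (P * B * Bᵀ * P).mulVec w)
          - 2 * (w ⬝ᵥ Q.mulVec w) := by
          rw [hRdecomp]
          simp [sub_mulVec, add_mulVec, smul_mulVec, dotProduct_add, dotProduct_sub,
            dotProduct_smul, smul_eq_mul]
      _ ≤ -2 * (w ⬝ᵥ Q.mulVec w) := by linarith
  -- complexified quantities
  set x : Fin d → ℝ := fun i => (v i).re with hx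
  set y : Fin d → ℝ := fun i => (v i).im with hy
  -- star v ⬝ᵥ (PM)c v = lam * s, star v ⬝ᵥ (MᵀP)c v = conj lam * s
  set Pc := P.map Complex.ofReal with hPc
  set Mc := M.map Complex.ofReal with hMcdef
  set s : ℂ := star v ⬝ᵥ Pc.mulVec v with hs
  have hmapmul : ∀ (X Y : Matrix (Fin d) (Fin d) ℝ),
      (X * Y).map Complex.ofReal = X.map Complex.ofReal * Y.map Complex.ofReal := by
    intro X Y
    exact Matrix.map_mul (f := Complex.ofRealHom)
  have hc1 : star v ⬝ᵥ ((P * M).map Complex.ofReal).mulVec v = lam * s := by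
    rw [hmapmul, ← Matrix.mulVec_mulVec, hv, Matrix.mulVec_smul, dotProduct_smul, smul_eq_mul]
  have hc2 : star v ⬝ᵥ ((Mᵀ * P).map Complex.ofReal).mulVec v = (starRingEnd ℂ) lam * s := by
    have hmapT : (Mᵀ).map Complex.ofReal = Mcᵀ := rfl
    rw [hmapmul, hmapT, ← Matrix.mulVec_mulVec, dotProduct_mulVec, vecMul_transpose,
      mulVec_star_real, hv]
    rw [star_smul, smul_dotProduct, smul_eq_mul]
    rfl
  have hkey : star v ⬝ᵥ (R.map Complex.ofReal).mulVec v = (lam + (starRingEnd ℂ) lam) * s := by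
    have : R.map Complex.ofReal
        = (P * M).map Complex.ofReal + (Mᵀ * P).map Complex.ofReal := by
      rw [hR]; exact Matrix.map_add _ (by simp) _ _
    rw [this, add_mulVec, dotProduct_add, hc1, hc2, add_mul]
  -- real parts
  have hs_re : 0 < s.re := by
    have := re_quad_form P v
    rw [← hs] at this
    have hvne : x ≠ 0 ∨ y ≠ 0 := by
      by_contra h
      push_neg at h
      apply hv0
      funext i
      have h1 := congrFun h.1 i
      have h2 := congrFun h.2 i
      simp only [hx, hy, Pi.zero_apply] at h1 h2
      exact Complex.ext h1 h2
    have hPsd : ∀ w : Fin d → ℝ, 0 ≤ w ⬝ᵥ P.mulVec w := fun w => by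
      simpa using hP.posSemidef.dotProduct_mulVec_nonneg w
    have hPpd : ∀ w : Fin d → ℝ, w ≠ 0 → 0 < w ⬝ᵥ P.mulVec w := fun w hw => by
      simpa using hP.dotProduct_mulVec_pos hw
    rw [this]
    rcases hvne with h | h
    · have := hPpd x h; have := hPsd y; linarith
    · have := hPpd y h; have := hPsd x; linarith
  have hc_re : (star v ⬝ᵥ (R.map Complex.ofReal).mulVec v).re < 0 := by
    rw [re_quad_form]
    have h1 := hquad x
    have h2 := hquad y
    have hvne : x ≠ 0 ∨ y ≠ 0 := by
      by_contra h
      push_neg at h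
      apply hv0
      funext i
      have h1 := congrFun h.1 i
      have h2 := congrFun h.2 i
      simp only [hx, hy, Pi.zero_apply] at h1 h2
      exact Complex.ext h1 h2
    have hQsd : ∀ w : Fin d → ℝ, 0 ≤ w ⬝ᵥ Q.mulVec w := fun w => by
      simpa using hQ.posSemidef.dotProduct_mulVec_nonneg w
    have hQpd : ∀ w : Fin d → ℝ, w ≠ 0 → 0 < w ⬝ᵥ Q.mulVec w := fun w hw => by
      simpa using hQ.dotProduct_mulVec_pos hw
    rcases hvne with h | h
    · have := hQpd x h; have := hQsd y; linarith
    · have := hQpd y h; have := hQsd x; linarith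
  rw [hkey] at hc_re
  have hsum : lam + (starRingEnd ℂ) lam = ((2 * lam.re : ℝ) : ℂ) := by
    rw [Complex.add_conj]
  rw [hsum] at hc_re
  have : (((2 * lam.re : ℝ) : ℂ) * s).re = 2 * lam.re * s.re := by
    simp [Complex.mul_re]
  rw [this] at hc_re
  nlinarith
end

section
/- (Total adaptive-weight increase equals an integrated quadratic form.) Let N ≥ 2 and d be positive integers, let K_w ∈ ℝ^{d×d} be symmetric positive semidefinite, let x_i : ℝ → ℝ^d (i = 1,…,N) be continuous, and let w_{ik} : ℝ → ℝ (i ≠ k) be differentiable on [0,∞) with ẇ_{ik}(t) = (x_k(t) − x_i(t))ᵀ K_w (x_k(t) − x_i(t)) for all t ≥ 0. Suppose each w_{ik}(t) converges to a limit γ_{ik} as t → +∞. Then, writing x(t) ∈ ℝ^{Nd} for the stacked vector and Π = I_N − (1/N)1_N1_Nᵀ, the function t ↦ x(t)ᵀ(Π ⊗ K_w)x(t) is integrable on [0,∞) and ∑_{i=1}^N ∑_{k=1, k≠i}^N (γ_{ik} − w_{ik}(0)) = 2N ∫_0^∞ x(t)ᵀ(Π ⊗ K_w) x(t) dt. -/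
open Matrix MeasureTheory Filter Kronecker

lemma key_quad (N d : ℕ) (hN : (N:ℝ) ≠ 0) (K : Matrix (Fin d) (Fin d) ℝ) (hs : Kᵀ = K)
    (v : Fin N → Fin d → ℝ) :
    ∑ i : Fin N, ∑ k : Fin N, (v k - v i) ⬝ᵥ K.mulVec (v k - v i) =
    2 * (N : ℝ) * ((fun q : Fin N × Fin d => v q.1 q.2) ⬝ᵥ
      ((((1 : Matrix (Fin N) (Fin N) ℝ) -
          (N : ℝ)⁻¹ • Matrix.of (fun _ _ : Fin N => (1 : ℝ))) ⊗ₖ K).mulVec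
        (fun q : Fin N × Fin d => v q.1 q.2))) := by
  have hsym : ∀ a b : Fin N, v a ⬝ᵥ K.mulVec (v b) = v b ⬝ᵥ K.mulVec (v a) := by
    intro a b
    rw [Matrix.dotProduct_mulVec, ← hs, Matrix.vecMul_transpose, dotProduct_comm, hs]
  have hrhs : ((fun q : Fin N × Fin d => v q.1 q.2) ⬝ᵥ
      ((((1 : Matrix (Fin N) (Fin N) ℝ) -
          (N : ℝ)⁻¹ • Matrix.of (fun _ _ : Fin N => (1 : ℝ))) ⊗ₖ K).mulVec
        (fun q : Fin N × Fin d => v q.1 q.2)))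
      = ∑ i : Fin N, ∑ k : Fin N,
        ((if i = k then (1:ℝ) else 0) - (N:ℝ)⁻¹) * (v i ⬝ᵥ K.mulVec (v k)) := by
    simp only [dotProduct, mulVec, kroneckerMap_apply, Matrix.sub_apply, Matrix.one_apply,
      Matrix.smul_apply, Matrix.of_apply, smul_eq_mul, mul_one, Fintype.sum_prod_type,
      Finset.mul_sum, Finset.sum_mul]
    apply Finset.sum_congr rfl; intro i _
    rw [Finset.sum_comm]
    apply Finset.sum_congr rfl; intro k _
    apply Finset.sum_congr rfl; intro a _
    apply Finset.sum_congr rfl; intro b _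
    ring
  rw [hrhs]
  set s : Fin N → Fin N → ℝ := fun i k => v i ⬝ᵥ K.mulVec (v k) with hsdef
  have h1 : ∀ i k : Fin N, (v k - v i) ⬝ᵥ K.mulVec (v k - v i)
      = s k k - s i k - s i k + s i i := by
    intro i k
    have h2 : (v k - v i) ⬝ᵥ K.mulVec (v k - v i)
        = s k k - s k i - s i k + s i i := by
      simp only [Matrix.mulVec_sub, sub_dotProduct, dotProduct_sub, hsdef]
      ring
    rw [h2, show s k i = s i k from hsym k i]
  simp only [h1]
  have hS1 : ∀ i : Fin N, ∑ k : Fin N, ((if i = k then (1:ℝ) else 0) - (N:ℝ)⁻¹) * s i k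
      = s i i - (N:ℝ)⁻¹ * ∑ k : Fin N, s i k := by
    intro i
    simp [sub_mul, ite_mul, Finset.sum_sub_distrib, Finset.mul_sum]
  erw [Finset.sum_congr rfl fun i _ => hS1 i]
  have hfin : ∑ i : Fin N, (s i i - (N:ℝ)⁻¹ * ∑ k : Fin N, s i k)
      = (∑ i : Fin N, s i i) - (N:ℝ)⁻¹ * ∑ i : Fin N, ∑ k : Fin N, s i k := by
    rw [Finset.sum_sub_distrib, ← Finset.mul_sum]
  rw [hfin]
  have hdiag : ∑ i : Fin N, ∑ k : Fin N, s k k = (N:ℝ) * ∑ k : Fin N, s k k := by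
    rw [Finset.sum_const, Finset.card_univ, Fintype.card_fin, nsmul_eq_mul]
  have hdiag2 : ∑ i : Fin N, ∑ k : Fin N, s i i = (N:ℝ) * ∑ i : Fin N, s i i := by
    simp only [Finset.sum_const, Finset.card_univ, Fintype.card_fin, nsmul_eq_mul,
      ← Finset.mul_sum]
  have hsplit : ∑ i : Fin N, ∑ k : Fin N, (s k k - s i k - s i k + s i i)
      = (∑ i : Fin N, ∑ k : Fin N, s k k) - (∑ i : Fin N, ∑ k : Fin N, s i k)
        - (∑ i : Fin N, ∑ k : Fin N, s i k) + ∑ i : Fin N, ∑ k : Fin N, s i i := by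
    simp [Finset.sum_sub_distrib, Finset.sum_add_distrib]
  rw [hsplit, hdiag, hdiag2]
  field_simp
  ring


/-- Total adaptive-weight increase equals an integrated quadratic form:
if `ẇ_{ik} = (x_k - x_i)ᵀ K_w (x_k - x_i)` on `[0,∞)` and `w_{ik}(t) → γ_{ik}`,
then `∑_i ∑_{k ≠ i} (γ_{ik} - w_{ik}(0)) = 2N ∫_0^∞ xᵀ (Π ⊗ K_w) x dt`
with `Π = I_N - (1/N) 1 1ᵀ`. -/
theorem adaptive_weight_increase_eq_integral
    (N d : ℕ) (hN : 2 ≤ N) (hd : 0 < d)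
    (Kw : Matrix (Fin d) (Fin d) ℝ)
    (hKwsymm : Kwᵀ = Kw) (hKwpsd : Kw.PosSemidef)
    (x : Fin N → ℝ → (Fin d → ℝ))
    (hxcont : ∀ i, Continuous (x i))
    (w : Fin N → Fin N → ℝ → ℝ)
    (hw : ∀ i k, i ≠ k → Differentiable ℝ (w i k))
    (hdynw : ∀ i k, i ≠ k → ∀ t : ℝ, 0 ≤ t →
      HasDerivAt (w i k) ((x k t - x i t) ⬝ᵥ Kw.mulVec (x k t - x i t)) t)
    (γik : Fin N → Fin N → ℝ)
    (hwlim : ∀ i k, i ≠ k → Tendsto (w i k) atTop (nhds (γik i k))) :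
    IntegrableOn
      (fun t => (fun q : Fin N × Fin d => x q.1 t q.2) ⬝ᵥ
        ((((1 : Matrix (Fin N) (Fin N) ℝ) -
            (N : ℝ)⁻¹ • Matrix.of (fun _ _ : Fin N => (1 : ℝ))) ⊗ₖ Kw).mulVec
          (fun q : Fin N × Fin d => x q.1 t q.2)))
      (Set.Ici (0 : ℝ)) ∧
    ∑ i : Fin N, ∑ k ∈ Finset.univ.erase i, (γik i k - w i k 0) =
      2 * (N : ℝ) * ∫ t in Set.Ici (0 : ℝ),
        (fun q : Fin N × Fin d => x q.1 t q.2) ⬝ᵥ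
          ((((1 : Matrix (Fin N) (Fin N) ℝ) -
              (N : ℝ)⁻¹ • Matrix.of (fun _ _ : Fin N => (1 : ℝ))) ⊗ₖ Kw).mulVec
            (fun q : Fin N × Fin d => x q.1 t q.2)) := by
  have hNne : (N : ℝ) ≠ 0 := by
    have : 0 < N := lt_of_lt_of_le (by norm_num) hN
    exact_mod_cast this.ne'
  set g : ℝ → ℝ := fun t => (fun q : Fin N × Fin d => x q.1 t q.2) ⬝ᵥ
      ((((1 : Matrix (Fin N) (Fin N) ℝ) -
          (N : ℝ)⁻¹ • Matrix.of (fun _ _ : Fin N => (1 : ℝ))) ⊗ₖ Kw).mulVec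
        (fun q : Fin N × Fin d => x q.1 t q.2)) with hg
  set f : Fin N → Fin N → ℝ → ℝ :=
    fun i k t => (x k t - x i t) ⬝ᵥ Kw.mulVec (x k t - x i t) with hf
  set F : ℝ → ℝ := fun t => ∑ i : Fin N, ∑ k ∈ Finset.univ.erase i, f i k t with hF
  set W : ℝ → ℝ := fun t => ∑ i : Fin N, ∑ k ∈ Finset.univ.erase i, w i k t with hW
  have hmem : ∀ i : Fin N, ∀ k ∈ Finset.univ.erase i, i ≠ k := by
    intro i k hk
    exact (Finset.ne_of_mem_erase hk).symm
  -- F t = 2 N g t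
  have hFg : ∀ t : ℝ, F t = 2 * (N : ℝ) * g t := by
    intro t
    have hfull : F t = ∑ i : Fin N, ∑ k : Fin N, f i k t := by
      apply Finset.sum_congr rfl
      intro i _
      apply Finset.sum_erase
      simp [hf]
    rw [hfull, hg]
    exact key_quad N d hNne Kw hKwsymm (fun i => x i t)
  -- positivity
  have hfpos : ∀ i k t, 0 ≤ f i k t := by
    intro i k t
    have := hKwpsd.dotProduct_mulVec_nonneg (x k t - x i t)
    simpa [hf] using this
  have hFpos : ∀ t, 0 ≤ F t := fun t =>
    Finset.sum_nonneg fun i _ => Finset.sum_nonneg fun k _ => hfpos i k t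
  -- W continuous
  have hWcont : Continuous W := by
    apply continuous_finset_sum
    intro i _
    apply continuous_finset_sum
    intro k hk
    exact (hw i k (hmem i k hk)).continuous
  -- W derivative
  have hWderiv : ∀ t ∈ Set.Ioi (0:ℝ), HasDerivAt W (F t) t := by
    intro t ht
    apply HasDerivAt.fun_sum
    intro i _
    apply HasDerivAt.fun_sum
    intro k hk
    exact hdynw i k (hmem i k hk) t (le_of_lt ht)
  -- W limit
  have hWlim : Tendsto W atTop
      (nhds (∑ i : Fin N, ∑ k ∈ Finset.univ.erase i, γik i k)) := by
    apply tendsto_finset_sum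
    intro i _
    apply tendsto_finset_sum
    intro k hk
    exact hwlim i k (hmem i k hk)
  have hWcw : ContinuousWithinAt W (Set.Ici (0:ℝ)) 0 := hWcont.continuousWithinAt
  have hFint : IntegrableOn F (Set.Ioi (0:ℝ)) :=
    integrableOn_Ioi_deriv_of_nonneg hWcw hWderiv (fun t ht => hFpos t) hWlim
  have hFeq : ∫ t in Set.Ioi (0:ℝ), F t
      = (∑ i : Fin N, ∑ k ∈ Finset.univ.erase i, γik i k) - W 0 :=
    integral_Ioi_of_hasDerivAt_of_tendsto hWcw hWderiv hFint hWlim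
  -- g integrable
  have hgFe : g = fun t => (2 * (N:ℝ))⁻¹ * F t := by
    funext t
    rw [hFg t]
    field_simp
  have hgint : IntegrableOn g (Set.Ioi (0:ℝ)) := by
    rw [hgFe]
    exact hFint.const_mul _
  have hgIci : IntegrableOn g (Set.Ici (0:ℝ)) :=
    (integrableOn_Ici_iff_integrableOn_Ioi (by finiteness)).mpr hgint
  refine ⟨hgIci, ?_⟩
  have hsum : ∑ i : Fin N, ∑ k ∈ Finset.univ.erase i, (γik i k - w i k 0)
      = (∑ i : Fin N, ∑ k ∈ Finset.univ.erase i, γik i k) - W 0 := by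
    simp [hW, Finset.sum_sub_distrib]
  rw [hsum, ← hFeq]
  have : ∫ t in Set.Ioi (0:ℝ), F t = 2 * (N:ℝ) * ∫ t in Set.Ioi (0:ℝ), g t := by
    rw [← MeasureTheory.integral_const_mul]
    apply setIntegral_congr_fun measurableSet_Ioi
    intro t _
    exact hFg t
  rw [this, MeasureTheory.integral_Ici_eq_integral_Ioi]
end
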